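/- arXiv:1705.04382 — 10 statements merged into one kernel-verified Lean document; each statement's English description precedes it below -/
import Mathlib

section
/- For real numbers a₁, a₂ > 0 and b₁, b₂ > 0, the double integral over the unit square ∫_0^1 ∫_0^1 x^{b₁-1} y^{b₂-1} / (−log(x^{a₁} y^{a₂})) dx dy equals the single integral ∫_0^∞ 1 / ((a₁ x + b₁)(a₂ x + b₂)) dx. -/
/-!
For `u = x ^ a₁ * y ^ a₂ ∈ (0, 1)` we have `1 / -log u = ∫_0^∞ u ^ t dt`, so the integrand equals
`∫_0^∞ x ^ (a₁ t + b₁ - 1) * y ^ (a₂ t + b₂ - 1) dt`. Everything is nonnegative, so by Tonelli we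
may integrate over `x` and `y` first, which gives `1 / ((a₁ t + b₁) (a₂ t + b₂))`.
The computation is done with lower Lebesgue integrals; passing back to the Bochner integrals
only needs the inner integrand to be integrable, which holds because it is dominated by a
multiple of `x ^ (b₁ - 1)`.
-/

open MeasureTheory Real Set

lemma integrableOn_rpow_sub_one_Ioo {s : ℝ} (hs : 0 < s) :
    IntegrableOn (fun x : ℝ => x ^ (s - 1)) (Ioo 0 1) :=
  (intervalIntegrable_iff_integrableOn_Ioo_of_le zero_le_one).1
    (intervalIntegral.intervalIntegrable_rpow' (by linarith))

lemma lintegral_rpow_sub_one_Ioo {s : ℝ} (hs : 0 < s) :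
    ∫⁻ x in Ioo 0 1, ENNReal.ofReal (x ^ (s - 1)) = ENNReal.ofReal (1 / s) := by
  rw [← ofReal_integral_eq_lintegral_ofReal, ← integral_Ioc_eq_integral_Ioo,
    ← intervalIntegral.integral_of_le zero_le_one, integral_rpow (Or.inl (by linarith)),
    sub_add_cancel, one_rpow, zero_rpow hs.ne', sub_zero]
  · exact integrableOn_rpow_sub_one_Ioo hs
  · filter_upwards [ae_restrict_mem measurableSet_Ioo] with x hx
    exact rpow_nonneg hx.1.le _

lemma lintegral_rpow_Ioi_of_lt_one {u : ℝ} (hu₀ : 0 < u) (hu₁ : u < 1) :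
    ∫⁻ t in Ioi (0:ℝ), ENNReal.ofReal (u ^ t) = ENNReal.ofReal (1 / -log u) := by
  have hlog : log u < 0 := log_neg hu₀ hu₁
  simp_rw [rpow_def_of_pos hu₀]
  rw [← ofReal_integral_eq_lintegral_ofReal (integrableOn_exp_mul_Ioi hlog 0)
    (ae_of_all _ fun _ => (exp_pos _).le), integral_exp_mul_Ioi hlog, mul_zero, exp_zero,
    neg_div, div_neg]

lemma ofReal_div_neg_log_eq_lintegral {p u : ℝ} (hp : 0 ≤ p) (hu₀ : 0 < u) (hu₁ : u < 1) :
    ENNReal.ofReal (p / -log u) = ∫⁻ t in Ioi (0:ℝ), ENNReal.ofReal (p * u ^ t) := by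
  simp_rw [ENNReal.ofReal_mul hp]
  rw [lintegral_const_mul' _ _ ENNReal.ofReal_ne_top, lintegral_rpow_Ioi_of_lt_one hu₀ hu₁,
    ← ENNReal.ofReal_mul hp, mul_one_div]

lemma rpow_mul_add_sub_one {x : ℝ} (hx : 0 < x) (a b t : ℝ) :
    x ^ (a * t + b - 1) = x ^ (b - 1) * (x ^ a) ^ t := by
  rw [← rpow_mul hx.le, ← rpow_add hx]; ring_nf

lemma rpow_mul_rpow_mem_Ioo {x y a₁ a₂ : ℝ} (hx : x ∈ Ioo 0 1) (hy : y ∈ Ioo 0 1)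
    (ha₁ : 0 < a₁) (ha₂ : 0 < a₂) : x ^ a₁ * y ^ a₂ ∈ Ioo 0 1 :=
  ⟨by have := hx.1; have := hy.1; positivity,
    mul_lt_one_of_nonneg_of_lt_one_left (rpow_nonneg hx.1.le _)
      (rpow_lt_one hx.1.le hx.2 ha₁) (rpow_le_one hy.1.le hy.2.le ha₂.le)⟩

lemma integral_integral_eq_toReal_lintegral_lintegral {α β : Type*} [MeasurableSpace α]
    [MeasurableSpace β] {μ : Measure α} {ν : Measure β} [SFinite μ] {f : α → β → ℝ}
    (hf : Measurable (Function.uncurry f)) (hnn : ∀ᵐ y ∂ν, ∀ᵐ x ∂μ, 0 ≤ f x y)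
    (hint : ∀ᵐ y ∂ν, Integrable (f · y) μ) :
    ∫ y, ∫ x, f x y ∂μ ∂ν = (∫⁻ y, ∫⁻ x, ENNReal.ofReal (f x y) ∂μ ∂ν).toReal := by
  rw [integral_eq_lintegral_of_nonneg_ae
    (hnn.mono fun _ hy => integral_nonneg_of_ae hy)
    hf.stronglyMeasurable.integral_prod_left'.aestronglyMeasurable]
  congr 1
  refine lintegral_congr_ae ?_
  filter_upwards [hnn, hint] with y hy hy'
  exact ofReal_integral_eq_lintegral_ofReal hy' hy

section UnitSquare

variable {a₁ a₂ b₁ b₂ : ℝ}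

lemma rpow_mul_rpow_div_neg_log_nonneg (ha₁ : 0 < a₁) (ha₂ : 0 < a₂) {x y : ℝ}
    (hx : x ∈ Ioo 0 1) (hy : y ∈ Ioo 0 1) :
    0 ≤ x ^ (b₁ - 1) * y ^ (b₂ - 1) / -log (x ^ a₁ * y ^ a₂) := by
  obtain ⟨hu₀, hu₁⟩ := rpow_mul_rpow_mem_Ioo hx hy ha₁ ha₂
  have := hx.1; have := hy.1
  exact div_nonneg (by positivity) (neg_nonneg.2 (log_nonpos hu₀.le hu₁.le))

lemma integrableOn_div_neg_log_Ioo (ha₁ : 0 < a₁) (ha₂ : 0 < a₂) (hb₁ : 0 < b₁) {y : ℝ}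
    (hy : y ∈ Ioo 0 1) :
    IntegrableOn (fun x => x ^ (b₁ - 1) * y ^ (b₂ - 1) / -log (x ^ a₁ * y ^ a₂)) (Ioo 0 1) := by
  have hlogy : 0 < -log (y ^ a₂) := neg_pos.2 (log_neg (rpow_pos_of_pos hy.1 _)
    (rpow_lt_one hy.1.le hy.2 ha₂))
  refine ((integrableOn_rpow_sub_one_Ioo hb₁).mul_const (y ^ (b₂ - 1) / -log (y ^ a₂))).mono'
    (Measurable.aestronglyMeasurable (by fun_prop)) ?_
  filter_upwards [ae_restrict_mem measurableSet_Ioo] with x hx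
  obtain ⟨hu₀, hu₁⟩ := rpow_mul_rpow_mem_Ioo hx hy ha₁ ha₂
  have hle : -log (y ^ a₂) ≤ -log (x ^ a₁ * y ^ a₂) := by
    refine neg_le_neg (log_le_log hu₀ ?_)
    exact mul_le_of_le_one_left (rpow_nonneg hy.1.le _) (rpow_le_one hx.1.le hx.2.le ha₁.le)
  have hp : 0 ≤ x ^ (b₁ - 1) * y ^ (b₂ - 1) := by have := hx.1; have := hy.1; positivity
  rw [norm_of_nonneg (div_nonneg hp (hlogy.trans_le hle).le), mul_div_assoc]
  exact mul_le_mul_of_nonneg_left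
    (div_le_div_of_nonneg_left (by have := hy.1; positivity) hlogy hle) (rpow_nonneg hx.1.le _)

lemma ofReal_div_neg_log_eq_lintegral_rpow (ha₁ : 0 < a₁) (ha₂ : 0 < a₂) {x y : ℝ}
    (hx : x ∈ Ioo 0 1) (hy : y ∈ Ioo 0 1) :
    ENNReal.ofReal (x ^ (b₁ - 1) * y ^ (b₂ - 1) / -log (x ^ a₁ * y ^ a₂)) =
      ∫⁻ t in Ioi (0:ℝ), ENNReal.ofReal (x ^ (a₁ * t + b₁ - 1)) *
        ENNReal.ofReal (y ^ (a₂ * t + b₂ - 1)) := by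
  obtain ⟨hu₀, hu₁⟩ := rpow_mul_rpow_mem_Ioo hx hy ha₁ ha₂
  rw [ofReal_div_neg_log_eq_lintegral (by have := hx.1; have := hy.1; positivity) hu₀ hu₁]
  refine lintegral_congr fun t => ?_
  rw [← ENNReal.ofReal_mul (rpow_nonneg hx.1.le _), rpow_mul_add_sub_one hx.1,
    rpow_mul_add_sub_one hy.1, mul_rpow (rpow_nonneg hx.1.le _) (rpow_nonneg hy.1.le _)]
  ring_nf

lemma lintegral_unit_square_div_neg_log (ha₁ : 0 < a₁) (ha₂ : 0 < a₂) (hb₁ : 0 < b₁)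
    (hb₂ : 0 < b₂) :
    ∫⁻ y in Ioo 0 1, ∫⁻ x in Ioo 0 1,
        ENNReal.ofReal (x ^ (b₁ - 1) * y ^ (b₂ - 1) / -log (x ^ a₁ * y ^ a₂)) =
      ∫⁻ t in Ioi (0:ℝ), ENNReal.ofReal (1 / ((a₁ * t + b₁) * (a₂ * t + b₂))) := by
  have hpos {a b t : ℝ} (ha : 0 < a) (hb : 0 < b) (ht : t ∈ Ioi (0:ℝ)) : 0 < a * t + b := by
    have : 0 < t := ht; positivity
  calc ∫⁻ y in Ioo 0 1, ∫⁻ x in Ioo 0 1,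
        ENNReal.ofReal (x ^ (b₁ - 1) * y ^ (b₂ - 1) / -log (x ^ a₁ * y ^ a₂))
      = ∫⁻ y in Ioo 0 1, ∫⁻ x in Ioo 0 1, ∫⁻ t in Ioi (0:ℝ),
          ENNReal.ofReal (x ^ (a₁ * t + b₁ - 1)) * ENNReal.ofReal (y ^ (a₂ * t + b₂ - 1)) :=
        setLIntegral_congr_fun measurableSet_Ioo fun y hy =>
          setLIntegral_congr_fun measurableSet_Ioo fun x hx =>
            ofReal_div_neg_log_eq_lintegral_rpow ha₁ ha₂ hx hy
    _ = ∫⁻ y in Ioo 0 1, ∫⁻ t in Ioi (0:ℝ), ∫⁻ x in Ioo 0 1,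
          ENNReal.ofReal (x ^ (a₁ * t + b₁ - 1)) * ENNReal.ofReal (y ^ (a₂ * t + b₂ - 1)) :=
        lintegral_congr fun y => lintegral_lintegral_swap (by fun_prop)
    _ = ∫⁻ y in Ioo 0 1, ∫⁻ t in Ioi (0:ℝ),
          ENNReal.ofReal (1 / (a₁ * t + b₁)) * ENNReal.ofReal (y ^ (a₂ * t + b₂ - 1)) := by
        refine lintegral_congr fun y => setLIntegral_congr_fun measurableSet_Ioi fun t ht => ?_
        rw [lintegral_mul_const' _ _ ENNReal.ofReal_ne_top,
          lintegral_rpow_sub_one_Ioo (hpos ha₁ hb₁ ht)]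
    _ = ∫⁻ t in Ioi (0:ℝ), ∫⁻ y in Ioo 0 1,
          ENNReal.ofReal (1 / (a₁ * t + b₁)) * ENNReal.ofReal (y ^ (a₂ * t + b₂ - 1)) :=
        lintegral_lintegral_swap (by fun_prop)
    _ = ∫⁻ t in Ioi (0:ℝ), ENNReal.ofReal (1 / ((a₁ * t + b₁) * (a₂ * t + b₂))) := by
        refine setLIntegral_congr_fun measurableSet_Ioi fun t ht => ?_
        rw [lintegral_const_mul' _ _ ENNReal.ofReal_ne_top,
          lintegral_rpow_sub_one_Ioo (hpos ha₂ hb₂ ht), ← ENNReal.ofReal_mul (by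
            have := hpos ha₁ hb₁ ht; positivity), one_div_mul_one_div]

end UnitSquare

theorem unit_square_to_single (a₁ a₂ b₁ b₂ : ℝ)
    (ha₁ : 0 < a₁) (ha₂ : 0 < a₂) (hb₁ : 0 < b₁) (hb₂ : 0 < b₂) :
    (∫ y in (0:ℝ)..1, ∫ x in (0:ℝ)..1,
        x ^ (b₁ - 1) * y ^ (b₂ - 1) / (-Real.log (x ^ a₁ * y ^ a₂)))
      = ∫ x in Set.Ioi (0:ℝ), 1 / ((a₁ * x + b₁) * (a₂ * x + b₂)) := by
  simp_rw [intervalIntegral.integral_of_le zero_le_one, integral_Ioc_eq_integral_Ioo]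
  rw [integral_integral_eq_toReal_lintegral_lintegral (by fun_prop),
    lintegral_unit_square_div_neg_log ha₁ ha₂ hb₁ hb₂,
    integral_eq_lintegral_of_nonneg_ae ?_ (Measurable.aestronglyMeasurable (by fun_prop))]
  · filter_upwards [ae_restrict_mem measurableSet_Ioi] with t (ht : 0 < t)
    positivity
  · filter_upwards [ae_restrict_mem measurableSet_Ioo] with y hy
    filter_upwards [ae_restrict_mem measurableSet_Ioo] with x hx
    exact rpow_mul_rpow_div_neg_log_nonneg ha₁ ha₂ hx hy
  · filter_upwards [ae_restrict_mem measurableSet_Ioo] with y hy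
    exact integrableOn_div_neg_log_Ioo ha₁ ha₂ hb₁ hy
end

section
/- ∫_0^1 ∫_0^1 (−1)/log(xy) dx dy = 1, and more generally for every natural number n ≥ 2, the n-fold integral over the unit cube of (−1)/log(x₁ x₂ ⋯ x_n) with respect to x₁, …, x_n equals 1/(n−1). -/
/-!
For `0 < p < 1` we have `-1 / log p = ∫₀^∞ p ^ t dt`. Substituting this with `p = x₁ ⋯ xₙ`
and exchanging the order of integration (the integrand is nonnegative), the cube integral becomes
`∫₀^∞ (∫₀¹ x ^ t dx)ⁿ dt = ∫₀^∞ (t + 1) ^ (-n) dt = 1 / (n - 1)`.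
-/

open MeasureTheory Real Set Filter Topology

lemma integral_Ioo_zero_one_rpow {t : ℝ} (ht : -1 < t) :
    ∫ x in Ioo (0 : ℝ) 1, x ^ t = (t + 1)⁻¹ := by
  rw [← integral_Ioc_eq_integral_Ioo, ← intervalIntegral.integral_of_le zero_le_one,
    integral_rpow (Or.inl ht), one_rpow, zero_rpow (by linarith), sub_zero, one_div]

lemma integral_Ioi_zero_const_rpow {p : ℝ} (hp₀ : 0 < p) (hp₁ : p < 1) :
    ∫ t in Ioi (0 : ℝ), p ^ t = -1 / log p := by
  simp_rw [rpow_def_of_pos hp₀]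
  rw [integral_exp_mul_Ioi (log_neg hp₀ hp₁), mul_zero, exp_zero]

lemma integral_Ioi_zero_add_one_rpow_neg {s : ℝ} (hs : 1 < s) :
    ∫ t in Ioi (0 : ℝ), (t + 1) ^ (-s) = 1 / (s - 1) := by
  have hs' : 1 - s ≠ 0 := by linarith
  have hderiv : ∀ t ∈ Ici (0 : ℝ),
      HasDerivAt (fun t => (t + 1) ^ (1 - s) / (1 - s)) ((t + 1) ^ (-s)) t := by
    intro t ht
    convert! (((hasDerivAt_id' t).add_const 1).rpow_const
      (Or.inl (by linarith [mem_Ici.mp ht]))).div_const (1 - s) using 1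
    rw [sub_sub_cancel_left, one_mul, mul_div_cancel_left₀ _ hs']
  have hlim : Tendsto (fun t : ℝ => (t + 1) ^ (1 - s) / (1 - s)) atTop (𝓝 0) := by
    rw [← zero_div (1 - s), ← neg_neg (1 - s)]
    exact ((tendsto_rpow_neg_atTop (by linarith)).comp
      (tendsto_atTop_add_const_right _ 1 tendsto_id)).div_const _
  rw [integral_Ioi_of_hasDerivAt_of_tendsto' hderiv
    (integrableOn_add_rpow_Ioi_of_lt (by linarith) (by norm_num)) hlim,
    zero_add, one_rpow, ← neg_div_neg_eq, neg_sub, zero_sub, neg_div, one_div, neg_neg]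

section NegInvLog

variable {α : Type*} [MeasurableSpace α] {μ : Measure α} [IsFiniteMeasure μ] {p : α → ℝ}

lemma integrable_rpow_prod_Ioi (hp : Measurable p) (hp01 : ∀ᵐ x ∂μ, p x ∈ Ioo 0 1)
    (hmom : IntegrableOn (fun t : ℝ => ∫ x, p x ^ t ∂μ) (Ioi 0)) :
    Integrable (fun z : α × ℝ => p z.1 ^ z.2) (μ.prod (volume.restrict (Ioi 0))) := by
  have hmeas : Measurable (fun z : α × ℝ => p z.1 ^ z.2) :=
    (hp.comp measurable_fst).pow measurable_snd
  refine (integrable_prod_iff' hmeas.aestronglyMeasurable).mpr ⟨?_, ?_⟩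
  · filter_upwards [ae_restrict_mem measurableSet_Ioi] with t (ht : 0 < t)
    refine (integrable_const (1 : ℝ)).mono'
      (hmeas.comp measurable_prodMk_right).aestronglyMeasurable ?_
    filter_upwards [hp01] with x hx
    rw [norm_of_nonneg (rpow_nonneg hx.1.le t)]
    exact rpow_le_one hx.1.le hx.2.le ht.le
  · refine hmom.congr (ae_of_all _ fun t => integral_congr_ae ?_)
    filter_upwards [hp01] with x hx
    exact (norm_of_nonneg (rpow_nonneg hx.1.le t)).symm

theorem integrable_neg_inv_log_and_integral_eq_integral_Ioi (hp : Measurable p)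
    (hp01 : ∀ᵐ x ∂μ, p x ∈ Ioo 0 1)
    (hmom : IntegrableOn (fun t : ℝ => ∫ x, p x ^ t ∂μ) (Ioi 0)) :
    Integrable (fun x => -1 / log (p x)) μ ∧
      ∫ x, -1 / log (p x) ∂μ = ∫ t in Ioi (0 : ℝ), ∫ x, p x ^ t ∂μ := by
  have hF := integrable_rpow_prod_Ioi hp hp01 hmom
  have hinner : (fun x => ∫ t in Ioi (0 : ℝ), p x ^ t) =ᵐ[μ] fun x => -1 / log (p x) := by
    filter_upwards [hp01] with x hx
    exact integral_Ioi_zero_const_rpow hx.1 hx.2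
  refine ⟨hF.integral_prod_left.congr hinner, ?_⟩
  rw [← integral_congr_ae hinner]
  exact integral_integral_swap hF

theorem integrable_neg_inv_log_and_integral_eq_of_integral_rpow (hp : Measurable p)
    (hp01 : ∀ᵐ x ∂μ, p x ∈ Ioo 0 1) {s : ℝ} (hs : 1 < s)
    (hmom : ∀ t : ℝ, 0 < t → ∫ x, p x ^ t ∂μ = (t + 1) ^ (-s)) :
    Integrable (fun x => -1 / log (p x)) μ ∧ ∫ x, -1 / log (p x) ∂μ = 1 / (s - 1) := by
  have hcongr : EqOn (fun t : ℝ => ∫ x, p x ^ t ∂μ) (fun t => (t + 1) ^ (-s)) (Ioi 0) :=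
    fun t ht => hmom t ht
  obtain ⟨hint, hval⟩ := integrable_neg_inv_log_and_integral_eq_integral_Ioi hp hp01
    ((integrableOn_add_rpow_Ioi_of_lt (by linarith) (by norm_num)).congr_fun hcongr.symm
      measurableSet_Ioi)
  refine ⟨hint, ?_⟩
  rw [hval, setIntegral_congr_fun measurableSet_Ioi hcongr, integral_Ioi_zero_add_one_rpow_neg hs]

end NegInvLog

lemma ae_pi_restrict_forall_mem {ι : Type*} [Fintype ι] {α : ι → Type*}
    [∀ i, MeasurableSpace (α i)] {μ : ∀ i, Measure (α i)} [∀ i, SigmaFinite (μ i)]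
    {s : ∀ i, Set (α i)} (hs : ∀ i, MeasurableSet (s i)) :
    ∀ᵐ x ∂(Measure.pi fun i => (μ i).restrict (s i)), ∀ i, x i ∈ s i :=
  ae_all_iff.2 fun i => Measure.tendsto_eval_ae_ae.eventually (ae_restrict_mem (hs i))

section UnitCube

variable {ι : Type*} [Fintype ι]

lemma integral_pi_Ioo_prod_rpow {t : ℝ} (ht : -1 < t) :
    ∫ x, (∏ i, x i) ^ t ∂(Measure.pi fun _ : ι => volume.restrict (Ioo (0 : ℝ) 1)) =
      (t + 1) ^ (-(Fintype.card ι : ℝ)) := by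
  set μ := Measure.pi fun _ : ι => volume.restrict (Ioo (0 : ℝ) 1)
  have hprod : (fun x : ι → ℝ => (∏ i, x i) ^ t) =ᵐ[μ] fun x => ∏ i, x i ^ t := by
    filter_upwards [ae_pi_restrict_forall_mem fun _ => measurableSet_Ioo] with x hx
    exact (finsetProd_rpow _ _ (fun i _ => (hx i).1.le) t).symm
  rw [integral_congr_ae hprod, integral_fintype_prod_eq_pow (fun x : ℝ => x ^ t),
    integral_Ioo_zero_one_rpow ht, inv_pow, rpow_neg (by linarith), rpow_natCast]

theorem integral_pi_Ioo_neg_inv_log_prod (hι : 1 < Fintype.card ι) :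
    ∫ x, -1 / log (∏ i, x i) ∂(Measure.pi fun _ : ι => volume.restrict (Ioo (0 : ℝ) 1)) =
      1 / ((Fintype.card ι : ℝ) - 1) := by
  have : Nonempty ι := Fintype.card_pos_iff.mp (by omega)
  set μ := Measure.pi fun _ : ι => volume.restrict (Ioo (0 : ℝ) 1)
  have hp01 : ∀ᵐ x ∂μ, ∏ i, x i ∈ Ioo 0 1 := by
    filter_upwards [ae_pi_restrict_forall_mem fun _ => measurableSet_Ioo] with x hx
    refine ⟨Finset.prod_pos fun i _ => (hx i).1, ?_⟩
    simpa using Finset.prod_lt_prod_of_nonempty (fun i _ => (hx i).1) (fun i _ => (hx i).2)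
      Finset.univ_nonempty
  exact (integrable_neg_inv_log_and_integral_eq_of_integral_rpow
    (Finset.measurable_prod _ fun i _ => measurable_pi_apply i) hp01 (by exact_mod_cast hι)
    fun _ ht => integral_pi_Ioo_prod_rpow (by linarith)).2

end UnitCube

-- `z.1` is the outer variable of the iterated integral `∫ y, ∫ x, f (x * y)`.
theorem integrable_neg_inv_log_mul_and_integral_eq_one :
    Integrable (fun z : ℝ × ℝ => -1 / log (z.2 * z.1))
        ((volume.restrict (Ioo (0 : ℝ) 1)).prod (volume.restrict (Ioo (0 : ℝ) 1))) ∧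
      ∫ z, -1 / log (z.2 * z.1)
        ∂((volume.restrict (Ioo (0 : ℝ) 1)).prod (volume.restrict (Ioo (0 : ℝ) 1))) = 1 := by
  set μ := (volume.restrict (Ioo (0 : ℝ) 1)).prod (volume.restrict (Ioo (0 : ℝ) 1)) with hμ
  have hmem : ∀ᵐ z ∂μ, z ∈ Ioo (0 : ℝ) 1 ×ˢ Ioo (0 : ℝ) 1 := by
    rw [hμ, Measure.prod_restrict]
    exact ae_restrict_mem (measurableSet_Ioo.prod measurableSet_Ioo)
  have hp01 : ∀ᵐ z ∂μ, z.2 * z.1 ∈ Ioo 0 1 := by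
    filter_upwards [hmem] with z ⟨hy, hx⟩
    exact ⟨mul_pos hx.1 hy.1, mul_lt_one_of_nonneg_of_lt_one_left hx.1.le hx.2 hy.2.le⟩
  have hmom : ∀ t : ℝ, 0 < t → ∫ z, (z.2 * z.1) ^ t ∂μ = (t + 1) ^ (-2 : ℝ) := by
    intro t ht
    have hmul : (fun z : ℝ × ℝ => (z.2 * z.1) ^ t) =ᵐ[μ] fun z => z.1 ^ t * z.2 ^ t := by
      filter_upwards [hmem] with z ⟨hy, hx⟩
      rw [mul_rpow hx.1.le hy.1.le, mul_comm]
    rw [integral_congr_ae hmul, integral_prod_mul (fun x : ℝ => x ^ t) (fun x : ℝ => x ^ t),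
      integral_Ioo_zero_one_rpow (by linarith), rpow_neg (by linarith), rpow_two, ← inv_pow, sq]
  obtain ⟨hint, hval⟩ := integrable_neg_inv_log_and_integral_eq_of_integral_rpow
    (measurable_snd.mul measurable_fst) hp01 one_lt_two hmom
  exact ⟨hint, hval.trans (by norm_num)⟩

theorem cube_integral_one_over_neg_log :
    (∫ y in (0:ℝ)..1, ∫ x in (0:ℝ)..1, (-1) / Real.log (x * y)) = 1 ∧
    ∀ n : ℕ, 2 ≤ n →
      (∫ x : Fin n → ℝ in Set.univ.pi fun _ => Set.Ioo (0:ℝ) 1,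
          (-1) / Real.log (∏ i, x i)) = 1 / ((n : ℝ) - 1) := by
  refine ⟨?_, fun n hn => ?_⟩
  · obtain ⟨hint, hval⟩ := integrable_neg_inv_log_mul_and_integral_eq_one
    simp_rw [intervalIntegral.integral_of_le zero_le_one, integral_Ioc_eq_integral_Ioo]
    rw [integral_integral hint, hval]
  · rw [volume_pi, Measure.restrict_pi_pi,
      integral_pi_Ioo_neg_inv_log_prod (by rw [Fintype.card_fin]; omega), Fintype.card_fin]
end

section
/- For natural numbers n > k ≥ 1, the n-fold integral over the unit cube [0,1]^n of (−1)^k/(log(x₁ x₂ ⋯ x_n))^k equals 1/((n−1)(n−2)⋯(n−k)). -/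
/-!
For `0 < p < 1` the Gamma integral gives `(-log p)⁻ᵏ = ((k-1)!)⁻¹ ∫₀^∞ s^(k-1) p^s ds`.
With `p = x₁ ⋯ xₙ`, integrating over the cube first (Tonelli) turns `p^s = ∏ xᵢ^s` into
`(1 + s)^(-n)`, and the remaining Beta-type integral
`∫₀^∞ s^(k-1) (1 + s)^(-n) ds = (k-1)! / ((n-1) ⋯ (n-k))` follows by integration by parts,
which lowers `k` and `n` by one together.
-/

open MeasureTheory Real Set Filter Topology
open scoped Nat

theorem integral_integral_swap_of_nonneg {α β : Type*} [MeasurableSpace α] [MeasurableSpace β]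
    {μ : Measure α} {ν : Measure β} [SFinite μ] [SFinite ν] {f : α → β → ℝ}
    (hf : AEStronglyMeasurable (Function.uncurry f) (μ.prod ν))
    (hf_nonneg : ∀ᵐ y ∂ν, ∀ᵐ x ∂μ, 0 ≤ f x y)
    (hf_section : ∀ᵐ y ∂ν, Integrable (f · y) μ)
    (hf_int : Integrable (fun y ↦ ∫ x, f x y ∂μ) ν) :
    ∫ x, ∫ y, f x y ∂ν ∂μ = ∫ y, ∫ x, f x y ∂μ ∂ν := by
  refine integral_integral_swap <| (integrable_prod_iff' hf).2 ⟨hf_section, hf_int.congr ?_⟩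
  filter_upwards [hf_nonneg] with y hy
  exact integral_congr_ae <| hy.mono fun x hx ↦ (norm_of_nonneg hx).symm

theorem integral_pow_mul_rpow_Ioi (m : ℕ) {p : ℝ} (hp₀ : 0 < p) (hp₁ : p < 1) :
    ∫ s in Ioi (0 : ℝ), s ^ m * p ^ s = m ! / (-log p) ^ (m + 1) := by
  have hr : 0 < -log p := neg_pos.2 (log_neg hp₀ hp₁)
  calc ∫ s in Ioi (0 : ℝ), s ^ m * p ^ s
      = ∫ s in Ioi (0 : ℝ), s ^ ((m + 1 : ℝ) - 1) * exp (-(-log p * s)) :=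
        setIntegral_congr_fun measurableSet_Ioi fun s _ ↦ by
          rw [add_sub_cancel_right, rpow_natCast, rpow_def_of_pos hp₀, neg_mul, neg_neg]
    _ = (1 / -log p) ^ ((m : ℝ) + 1) * Gamma (m + 1) :=
        integral_rpow_mul_exp_neg_mul_Ioi (by positivity) hr
    _ = m ! / (-log p) ^ (m + 1) := by
        rw [Gamma_nat_eq_factorial, ← Nat.cast_succ, rpow_natCast, div_pow, one_pow,
          one_div_mul_eq_div]

theorem integral_univ_pi_Ioo_prod_rpow (ι : Type*) [Fintype ι] {s : ℝ} (hs : -1 < s) :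
    ∫ x : ι → ℝ in univ.pi fun _ ↦ Ioo 0 1, (∏ i, x i) ^ s
      = (1 + s) ^ (-(Fintype.card ι : ℝ)) := by
  have h_one_dim : ∫ t in Ioo (0 : ℝ) 1, t ^ s = (1 + s)⁻¹ := by
    rw [← integral_Ioc_eq_integral_Ioo, ← intervalIntegral.integral_of_le zero_le_one,
      integral_rpow (Or.inl hs), one_rpow, zero_rpow (by linarith), add_comm]
    ring
  calc ∫ x : ι → ℝ in univ.pi fun _ ↦ Ioo 0 1, (∏ i, x i) ^ s
      = ∫ x : ι → ℝ in univ.pi fun _ ↦ Ioo 0 1, ∏ i, x i ^ s :=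
        setIntegral_congr_fun (.univ_pi fun _ ↦ measurableSet_Ioo) fun x hx ↦
          (finsetProd_rpow _ _ (fun i _ ↦ (hx i trivial).1.le) s).symm
    _ = ∫ x : ι → ℝ, ∏ i, x i ^ s ∂Measure.pi fun _ ↦ volume.restrict (Ioo 0 1) := by
        rw [volume_pi, Measure.restrict_pi_pi]
    _ = (1 + s) ^ (-(Fintype.card ι : ℝ)) := by
        rw [integral_fintype_prod_eq_pow (fun t : ℝ ↦ t ^ s), h_one_dim, rpow_neg (by linarith),
          rpow_natCast, inv_pow]

theorem pow_mul_one_add_rpow_neg_le (k : ℕ) (b : ℝ) {s : ℝ} (hs : 0 ≤ s) :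
    s ^ k * (1 + s) ^ (-b) ≤ (1 + s) ^ ((k : ℝ) - b) := by
  rw [sub_eq_add_neg, rpow_add (by linarith), rpow_natCast]
  gcongr
  linarith

theorem integrableOn_pow_mul_one_add_rpow_neg_Ioi (k : ℕ) {b : ℝ} (hb : k + 1 < b) :
    IntegrableOn (fun s : ℝ ↦ s ^ k * (1 + s) ^ (-b)) (Ioi 0) := by
  have hg : Integrable (fun s : ℝ ↦ (1 + ‖s‖) ^ (-(b - k))) :=
    integrable_one_add_norm (by simp; linarith)
  refine hg.integrableOn.mono' ?_ ?_
  · exact (by fun_prop : Measurable fun s : ℝ ↦ s ^ k * (1 + s) ^ (-b)).aestronglyMeasurable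
  · filter_upwards [ae_restrict_mem measurableSet_Ioi] with s (hs : 0 < s)
    rw [norm_of_nonneg (by positivity), norm_of_nonneg hs.le, neg_sub]
    exact pow_mul_one_add_rpow_neg_le k b hs.le

theorem tendsto_one_add_rpow_atTop_zero {c : ℝ} (hc : c < 0) :
    Tendsto (fun s : ℝ ↦ (1 + s) ^ c) atTop (𝓝 0) := by
  simpa [Function.comp_def] using (tendsto_rpow_neg_atTop (neg_pos.2 hc)).comp
    (tendsto_atTop_add_const_left _ 1 tendsto_id)

theorem hasDerivAt_one_add_rpow (c : ℝ) {s : ℝ} (hs : -1 < s) :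
    HasDerivAt (fun s ↦ (1 + s) ^ c) (c * (1 + s) ^ (c - 1)) s := by
  simpa using ((hasDerivAt_id s).const_add 1).rpow_const (p := c)
    (Or.inl (by simp only [id_eq]; linarith))

theorem integral_one_add_rpow_neg_Ioi {b : ℝ} (hb : 1 < b) :
    ∫ s in Ioi (0 : ℝ), (1 + s) ^ (-b) = 1 / (b - 1) := by
  have hderiv : ∀ s ∈ Ici (0 : ℝ),
      HasDerivAt (fun s ↦ -(1 + s) ^ (1 - b) / (b - 1)) ((1 + s) ^ (-b)) s := fun s hs ↦
    ((hasDerivAt_one_add_rpow (1 - b) (by linarith [hs.out])).neg.div_const _).congr_deriv (by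
      rw [sub_sub_cancel_left]; field_simp [(by linarith : b - 1 ≠ 0)]; ring)
  have hint := integrableOn_pow_mul_one_add_rpow_neg_Ioi 0 (b := b) (by simpa using hb)
  have hlim := (tendsto_one_add_rpow_atTop_zero (by linarith : 1 - b < 0)).neg.div_const (b - 1)
  rw [neg_zero, zero_div] at hlim
  rw [integral_Ioi_of_hasDerivAt_of_tendsto' hderiv (by simpa using hint) hlim]
  simp [neg_div]

theorem integral_pow_succ_mul_one_add_rpow_neg_Ioi (k : ℕ) {b : ℝ} (hb : k + 1 < b) :
    ∫ s in Ioi (0 : ℝ), s ^ (k + 1) * (1 + s) ^ (-(b + 1))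
      = (k + 1) / b * ∫ s in Ioi (0 : ℝ), s ^ k * (1 + s) ^ (-b) := by
  have hb₀ : 0 < b := by linarith
  have hderiv : ∀ s ∈ Ici (0 : ℝ), HasDerivAt (fun s ↦ s ^ (k + 1) * (1 + s) ^ (-b))
      ((k + 1) * (s ^ k * (1 + s) ^ (-b)) - b * (s ^ (k + 1) * (1 + s) ^ (-(b + 1)))) s :=
    fun s hs ↦ ((hasDerivAt_pow (k + 1) s).mul
      (hasDerivAt_one_add_rpow (-b) (by linarith [hs.out]))).congr_deriv (by
        rw [neg_add']; push_cast; ring)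
  have hint₁ := integrableOn_pow_mul_one_add_rpow_neg_Ioi k hb
  have hint₂ :=
    integrableOn_pow_mul_one_add_rpow_neg_Ioi (k + 1) (b := b + 1) (by push_cast; linarith)
  have hlim : Tendsto (fun s : ℝ ↦ s ^ (k + 1) * (1 + s) ^ (-b)) atTop (𝓝 0) := by
    refine squeeze_zero' ?_ ?_
      (tendsto_one_add_rpow_atTop_zero (by push_cast; linarith : ((k + 1 : ℕ) : ℝ) - b < 0))
    all_goals filter_upwards [eventually_ge_atTop 0] with s hs
    exacts [by positivity, pow_mul_one_add_rpow_neg_le (k + 1) b hs]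
  have h := integral_Ioi_of_hasDerivAt_of_tendsto' hderiv
    ((hint₁.const_mul _).sub (hint₂.const_mul _)) hlim
  rw [integral_sub (hint₁.const_mul _) (hint₂.const_mul _), integral_const_mul,
    integral_const_mul] at h
  simp only [zero_pow k.succ_ne_zero, zero_mul, sub_zero] at h
  rw [div_mul_eq_mul_div, eq_div_iff hb₀.ne']
  linarith

theorem integral_pow_mul_one_add_rpow_neg_Ioi (k : ℕ) {b : ℝ} (hb : k + 1 < b) :
    ∫ s in Ioi (0 : ℝ), s ^ k * (1 + s) ^ (-b)
      = k ! / ∏ j ∈ Finset.range (k + 1), (b - 1 - j) := by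
  induction k generalizing b with
  | zero => simpa using integral_one_add_rpow_neg_Ioi (by simpa using hb)
  | succ k ih =>
    obtain ⟨c, rfl⟩ : ∃ c, b = c + 1 := ⟨b - 1, by ring⟩
    have hc : (k : ℝ) + 1 < c := by push_cast at hb; linarith
    have hprod : ∏ j ∈ Finset.range (k + 1), (c + 1 - 1 - ((j + 1 : ℕ) : ℝ))
        = ∏ j ∈ Finset.range (k + 1), (c - 1 - j) :=
      Finset.prod_congr rfl fun j _ ↦ by push_cast; ring
    rw [integral_pow_succ_mul_one_add_rpow_neg_Ioi k hc, ih hc,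
      Finset.prod_range_succ' (fun j : ℕ ↦ c + 1 - 1 - (j : ℝ)) (k + 1), hprod,
      Nat.factorial_succ]
    push_cast
    ring

theorem prod_mem_Ioo_of_mem_univ_pi_Ioo {ι : Type*} [Fintype ι] [Nonempty ι] {x : ι → ℝ}
    (hx : x ∈ univ.pi fun _ ↦ Ioo (0 : ℝ) 1) : ∏ i, x i ∈ Ioo (0 : ℝ) 1 :=
  ⟨Finset.prod_pos fun i _ ↦ (hx i trivial).1,
    (Finset.prod_lt_prod_of_nonempty (fun i _ ↦ (hx i trivial).1) (fun i _ ↦ (hx i trivial).2)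
      Finset.univ_nonempty).trans_eq Finset.prod_const_one⟩

theorem integral_univ_pi_Ioo_integral_pow_mul_prod_rpow_Ioi (ι : Type*) [Fintype ι]
    (m : ℕ) (hm : m + 1 < Fintype.card ι) :
    ∫ x : ι → ℝ in univ.pi fun _ ↦ Ioo 0 1, ∫ s in Ioi (0 : ℝ), s ^ m * (∏ i, x i) ^ s
      = ∫ s in Ioi (0 : ℝ), s ^ m * (1 + s) ^ (-(Fintype.card ι : ℝ)) := by
  have hC : MeasurableSet (univ.pi fun _ : ι ↦ Ioo (0 : ℝ) 1) :=
    .univ_pi fun _ ↦ measurableSet_Ioo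
  have hcube : ∀ s ∈ Ioi (0 : ℝ),
      ∫ x : ι → ℝ in univ.pi fun _ ↦ Ioo 0 1, s ^ m * (∏ i, x i) ^ s
        = s ^ m * (1 + s) ^ (-(Fintype.card ι : ℝ)) := fun s hs ↦ by
    rw [integral_const_mul, integral_univ_pi_Ioo_prod_rpow _ (by linarith [hs.out])]
  rw [integral_integral_swap_of_nonneg, setIntegral_congr_fun measurableSet_Ioi hcube]
  · exact Measurable.aestronglyMeasurable (by fun_prop)
  · filter_upwards [ae_restrict_mem measurableSet_Ioi] with s (hs : 0 < s)
    filter_upwards [ae_restrict_mem hC] with x hx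
    have : 0 < ∏ i, x i := Finset.prod_pos fun i _ ↦ (hx i trivial).1
    positivity
  · filter_upwards [ae_restrict_mem measurableSet_Ioi] with s (hs : 0 < s)
    exact .of_integral_ne_zero <| by rw [hcube s hs]; positivity
  · exact (integrableOn_pow_mul_one_add_rpow_neg_Ioi m (by exact_mod_cast hm)).congr_fun
      (fun s hs ↦ (hcube s hs).symm) measurableSet_Ioi

theorem cube_integral_neg_log_pow_k (n k : ℕ) (hk : 1 ≤ k) (hkn : k < n) :
    (∫ x : Fin n → ℝ in Set.univ.pi fun _ => Set.Ioo (0:ℝ) 1,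
        (-1 : ℝ) ^ k / (Real.log (∏ i, x i)) ^ k)
      = 1 / ∏ j ∈ Finset.range k, ((n : ℝ) - 1 - (j : ℝ)) := by
  obtain ⟨m, rfl⟩ : ∃ m, k = m + 1 := ⟨k - 1, by omega⟩
  have : Nonempty (Fin n) := ⟨⟨0, by omega⟩⟩
  calc (∫ x : Fin n → ℝ in univ.pi fun _ ↦ Ioo 0 1,
          (-1 : ℝ) ^ (m + 1) / log (∏ i, x i) ^ (m + 1))
      = ∫ x : Fin n → ℝ in univ.pi fun _ ↦ Ioo 0 1,
          (m ! : ℝ)⁻¹ * ∫ s in Ioi (0 : ℝ), s ^ m * (∏ i, x i) ^ s :=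
        setIntegral_congr_fun (.univ_pi fun _ ↦ measurableSet_Ioo) fun x hx ↦ by
          obtain ⟨hp₀, hp₁⟩ := prod_mem_Ioo_of_mem_univ_pi_Ioo hx
          rw [integral_pow_mul_rpow_Ioi m hp₀ hp₁, ← mul_div_assoc,
            inv_mul_cancel₀ (by positivity), ← div_pow, ← one_div_pow,
            one_div_neg_eq_neg_one_div, neg_div]
    _ = (m ! : ℝ)⁻¹ * ∫ s in Ioi (0 : ℝ), s ^ m * (1 + s) ^ (-(n : ℝ)) := by
        rw [integral_const_mul, integral_univ_pi_Ioo_integral_pow_mul_prod_rpow_Ioi _ m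
          (by simpa using hkn), Fintype.card_fin]
    _ = 1 / ∏ j ∈ Finset.range (m + 1), ((n : ℝ) - 1 - j) := by
        rw [integral_pow_mul_one_add_rpow_neg_Ioi m (by exact_mod_cast hkn)]
        field_simp
end

section
/- ∫_0^1 ∫_0^1 ∫_0^1 x³ y² z / (−log(x y² z³)) dx dy dz = (1/50)·log(2187/512). -/
/-!
Since `1 / (-log u) = ∫₀^∞ u ^ t dt` for `0 < u < 1`, the integrand is
`∫₀^∞ x ^ (t + 3) * y ^ (2 * t + 2) * z ^ (3 * t + 1) dt`. Integrating out `x`, `y`, `z` one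
at a time under the `t`-integral (Fubini: the integrand of each step is dominated by an
integrable function of `t`) leaves `∫₀^∞ dt / ((t + 4) * (2 * t + 3) * (3 * t + 2))`, and the
partial fraction decomposition
`50 / ((t + 4) * (2 * t + 3) * (3 * t + 2)) = 1 / (t + 4) - 8 / (2 * t + 3) + 9 / (3 * t + 2)`
gives the antiderivative `(log (t + 4) - 4 * log (2 * t + 3) + 3 * log (3 * t + 2)) / 50`, whose
limit at infinity is `log (27 / 16) / 50` and whose value at `0` is `log (32 / 81) / 50`.
-/

open MeasureTheory Real Set Filter Topology

theorem integrableOn_const_rpow_Ioi_zero {a : ℝ} (ha0 : 0 < a) (ha1 : a < 1) :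
    IntegrableOn (fun t : ℝ => a ^ t) (Ioi 0) := by
  simpa only [rpow_def_of_pos ha0] using integrableOn_exp_mul_Ioi (log_neg ha0 ha1) 0

theorem integral_const_rpow_Ioi_zero {a : ℝ} (ha0 : 0 < a) (ha1 : a < 1) :
    ∫ t in Ioi (0:ℝ), a ^ t = (-log a)⁻¹ := by
  simp only [rpow_def_of_pos ha0, integral_exp_mul_Ioi (log_neg ha0 ha1), mul_zero, exp_zero]
  field_simp

theorem integrable_pow_mul_rpow_mul_Ioc_prod_Ioi (m : ℕ) {n : ℝ} (hn : 0 < n) {g : ℝ → ℝ}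
    (hg : IntegrableOn g (Ioi 0)) :
    Integrable (Function.uncurry fun s t : ℝ => s ^ m * (s ^ (n * t) * g t))
      ((volume.restrict (Ioc 0 1)).prod (volume.restrict (Ioi 0))) := by
  refine (hg.norm.comp_snd _).mono ?_ ?_
  · exact ((by fun_prop : Measurable fun p : ℝ × ℝ => p.1 ^ m * p.1 ^ (n * p.2))
      |>.aestronglyMeasurable.mul (hg.comp_snd _).aestronglyMeasurable).congr
      (.of_forall fun p => (mul_assoc _ _ _))
  · rw [Measure.prod_restrict]
    filter_upwards [ae_restrict_mem (measurableSet_Ioc.prod measurableSet_Ioi)]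
    rintro ⟨s, t⟩ ⟨⟨hs0, hs1⟩, ht⟩
    have hst : s ^ (n * t) ≤ 1 := rpow_le_one hs0.le hs1 (by positivity [ht.out])
    simp only [Function.uncurry_apply_pair, norm_mul, norm_norm, norm_pow,
      norm_of_nonneg hs0.le, norm_of_nonneg (rpow_nonneg hs0.le _)]
    calc s ^ m * (s ^ (n * t) * ‖g t‖) ≤ 1 * (1 * ‖g t‖) := by
          gcongr; exact pow_le_one₀ hs0.le hs1
      _ = ‖g t‖ := by ring

theorem integral_pow_mul_integral_rpow_mul (m : ℕ) {n : ℝ} (hn : 0 < n) {g : ℝ → ℝ}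
    (hg : IntegrableOn g (Ioi 0)) :
    ∫ s in (0:ℝ)..1, s ^ m * ∫ t in Ioi 0, s ^ (n * t) * g t
      = ∫ t in Ioi 0, g t / (n * t + m + 1) := by
  rw [intervalIntegral.integral_of_le zero_le_one]
  calc ∫ s in Ioc 0 1, s ^ m * ∫ t in Ioi 0, s ^ (n * t) * g t
      = ∫ s in Ioc 0 1, ∫ t in Ioi 0, s ^ m * (s ^ (n * t) * g t) := by
        simp only [integral_const_mul]
    _ = ∫ t in Ioi 0, ∫ s in Ioc 0 1, s ^ m * (s ^ (n * t) * g t) :=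
        integral_integral_swap (integrable_pow_mul_rpow_mul_Ioc_prod_Ioi m hn hg)
    _ = ∫ t in Ioi 0, g t / (n * t + m + 1) := by
        refine setIntegral_congr_fun measurableSet_Ioi fun t ht => ?_
        have hexp : -1 < (m + n * t : ℝ) := by nlinarith [ht.out, m.cast_nonneg (α := ℝ)]
        have hpow : ∀ s ∈ Ioc (0:ℝ) 1,
            s ^ m * (s ^ (n * t) * g t) = s ^ (m + n * t : ℝ) * g t :=
          fun s hs => by rw [rpow_add hs.1, rpow_natCast, mul_assoc]
        rw [setIntegral_congr_fun measurableSet_Ioc hpow, integral_mul_const,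
          ← intervalIntegral.integral_of_le zero_le_one, integral_rpow (.inl hexp), one_rpow,
          zero_rpow (by linarith), sub_zero]
        field_simp
        ring

theorem integral_dx {y z : ℝ} (hy : y ∈ Ioo (0:ℝ) 1) (hz : z ∈ Ioo (0:ℝ) 1) :
    ∫ x in (0:ℝ)..1, x ^ 3 * y ^ 2 * z / (-log (x * y ^ 2 * z ^ 3))
      = y ^ 2 * z * ∫ t in Ioi (0:ℝ), (y ^ 2 * z ^ 3) ^ t / (t + 4) := by
  obtain ⟨hy0, hy1⟩ := hy
  obtain ⟨hz0, hz1⟩ := hz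
  set a := y ^ 2 * z ^ 3
  have ha0 : 0 < a := by positivity
  have ha1 : a < 1 := mul_lt_one_of_nonneg_of_lt_one_left (by positivity)
    (pow_lt_one₀ hy0.le hy1 two_ne_zero) (pow_le_one₀ hz0.le hz1.le)
  have hrepr : ∀ x ∈ Ioo (0:ℝ) 1, x ^ 3 * y ^ 2 * z / (-log (x * y ^ 2 * z ^ 3))
      = y ^ 2 * z * (x ^ 3 * ∫ t in Ioi (0:ℝ), x ^ (1 * t) * a ^ t) := by
    rintro x ⟨hx0, hx1⟩
    have hxa1 : x * a < 1 := by nlinarith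
    simp only [one_mul, ← mul_rpow hx0.le ha0.le,
      integral_const_rpow_Ioi_zero (by positivity) hxa1]
    rw [mul_assoc x]
    ring
  rw [intervalIntegral.integral_congr_Ioo_of_le zero_le_one hrepr,
    intervalIntegral.integral_const_mul, integral_pow_mul_integral_rpow_mul 3 one_pos
      (integrableOn_const_rpow_Ioi_zero ha0 ha1)]
  congr 2 with t
  push_cast
  ring

theorem integral_dy {z : ℝ} (hz : z ∈ Ioo (0:ℝ) 1) :
    ∫ y in (0:ℝ)..1, y ^ 2 * z * ∫ t in Ioi (0:ℝ), (y ^ 2 * z ^ 3) ^ t / (t + 4)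
      = z * ∫ t in Ioi (0:ℝ), (z ^ 3) ^ t / ((t + 4) * (2 * t + 3)) := by
  obtain ⟨hz0, hz1⟩ := hz
  set b := z ^ 3
  have hb0 : 0 < b := by positivity
  have hb1 : b < 1 := pow_lt_one₀ hz0.le hz1 three_ne_zero
  have hrepr : ∀ y ∈ Ioo (0:ℝ) 1, y ^ 2 * z * ∫ t in Ioi (0:ℝ), (y ^ 2 * b) ^ t / (t + 4)
      = z * (y ^ 2 * ∫ t in Ioi (0:ℝ), y ^ (2 * t) * (b ^ t / (t + 4))) := by
    rintro y ⟨hy0, -⟩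
    simp only [mul_rpow (by positivity : 0 ≤ y ^ 2) hb0.le, rpow_mul hy0.le, mul_div_assoc]
    norm_cast
    ring
  have hg : IntegrableOn (fun t => b ^ t / (t + 4)) (Ioi 0) := by
    refine (integrableOn_const_rpow_Ioi_zero hb0 hb1).mono'
      (Measurable.aestronglyMeasurable (by fun_prop)) ?_
    filter_upwards [ae_restrict_mem measurableSet_Ioi] with t ht
    rw [norm_div, norm_of_nonneg (rpow_nonneg hb0.le t), norm_of_nonneg (by linarith [ht.out])]
    exact div_le_self (rpow_nonneg hb0.le t) (by linarith [ht.out])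
  rw [intervalIntegral.integral_congr_Ioo_of_le zero_le_one hrepr,
    intervalIntegral.integral_const_mul, integral_pow_mul_integral_rpow_mul 2 two_pos hg]
  congr 2 with t
  rw [div_div]
  push_cast
  ring

theorem integral_dz :
    ∫ z in (0:ℝ)..1, z * ∫ t in Ioi (0:ℝ), (z ^ 3) ^ t / ((t + 4) * (2 * t + 3))
      = ∫ t in Ioi (0:ℝ), 1 / ((t + 4) * (2 * t + 3) * (3 * t + 2)) := by
  have hrepr : ∀ z ∈ Ioo (0:ℝ) 1,
      z * ∫ t in Ioi (0:ℝ), (z ^ 3) ^ t / ((t + 4) * (2 * t + 3))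
        = z ^ 1 * ∫ t in Ioi (0:ℝ), z ^ (3 * t) * (1 / ((t + 4) * (2 * t + 3))) := by
    rintro z ⟨hz0, -⟩
    simp only [rpow_mul hz0.le, mul_one_div, pow_one]
    norm_cast
  have hg : IntegrableOn (fun t : ℝ => 1 / ((t + 4) * (2 * t + 3))) (Ioi 0) := by
    refine integrable_inv_one_add_sq.integrableOn.mono'
      (Measurable.aestronglyMeasurable (by fun_prop)) ?_
    filter_upwards [ae_restrict_mem measurableSet_Ioi] with t ht
    have ht0 : 0 < t := ht
    rw [norm_of_nonneg (by positivity), one_div]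
    exact inv_anti₀ (by positivity) (by nlinarith)
  rw [intervalIntegral.integral_congr_Ioo_of_le zero_le_one hrepr,
    integral_pow_mul_integral_rpow_mul 1 three_pos hg]
  congr 1 with t
  rw [div_div]
  push_cast
  ring

theorem tendsto_linear_div_linear_atTop (a b c d : ℝ) (hc : c ≠ 0) :
    Tendsto (fun t => (a * t + b) / (c * t + d)) atTop (𝓝 (a / c)) := by
  have h0 : Tendsto (fun u : ℝ => (a + b * u) / (c + d * u)) (𝓝 0) (𝓝 (a / c)) := by
    simpa using (ContinuousAt.div₀ (by fun_prop) (by fun_prop) (by simpa using hc) :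
      ContinuousAt (fun u : ℝ => (a + b * u) / (c + d * u)) 0).tendsto
  refine (h0.comp tendsto_inv_atTop_zero).congr' ?_
  filter_upwards [eventually_gt_atTop 0] with t ht
  simp only [Function.comp_apply]
  field_simp

theorem integral_Ioi_one_div_linear_factors :
    ∫ t in Ioi (0:ℝ), 1 / ((t + 4) * (2 * t + 3) * (3 * t + 2))
      = (1 / 50) * log (2187 / 512) := by
  let F : ℝ → ℝ := fun t => (log (t + 4) - 4 * log (2 * t + 3) + 3 * log (3 * t + 2)) / 50
  have hderiv : ∀ t ∈ Ici (0:ℝ),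
      HasDerivAt F (1 / ((t + 4) * (2 * t + 3) * (3 * t + 2))) t := by
    intro t (ht : 0 ≤ t)
    have h1 := ((hasDerivAt_id' t).add_const 4).log (by positivity)
    have h2 := (((hasDerivAt_id' t).const_mul 2).add_const 3).log (by positivity)
    have h3 := (((hasDerivAt_id' t).const_mul 3).add_const 2).log (by positivity)
    refine (((h1.sub (h2.const_mul 4)).add (h3.const_mul 3)).div_const 50).congr_deriv ?_
    field_simp
    ring
  have hlim : Tendsto F atTop (𝓝 ((log (1 / 2) + 3 * log (3 / 2)) / 50)) := by
    have h1 := (continuousAt_log (by norm_num)).tendsto.comp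
      (tendsto_linear_div_linear_atTop 1 4 2 3 two_ne_zero)
    have h2 := (continuousAt_log (by norm_num)).tendsto.comp
      (tendsto_linear_div_linear_atTop 3 2 2 3 two_ne_zero)
    refine ((h1.add (h2.const_mul 3)).div_const 50).congr' ?_
    filter_upwards [eventually_gt_atTop 0] with t ht
    simp only [Function.comp_apply, F, one_mul]
    rw [log_div (by positivity) (by positivity), log_div (by positivity) (by positivity)]
    ring
  rw [integral_Ioi_of_hasDerivAt_of_nonneg' hderiv (fun t (ht : 0 < t) => by positivity) hlim]
  have h4 : log 4 = 2 * log 2 := by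
    rw [show (4 : ℝ) = 2 ^ 2 by norm_num, log_pow]; norm_num
  have h2187 : log (2187 / 512) = 7 * log 3 - 9 * log 2 := by
    rw [show (2187 / 512 : ℝ) = 3 ^ 7 / 2 ^ 9 by norm_num, log_div (by norm_num) (by norm_num),
      log_pow, log_pow]
    norm_num
  simp only [F]
  rw [one_div, log_inv, log_div three_ne_zero two_ne_zero]
  norm_num [h4, h2187]
  ring

theorem triple_integral_example :
    (∫ z in (0:ℝ)..1, ∫ y in (0:ℝ)..1, ∫ x in (0:ℝ)..1,
        x ^ 3 * y ^ 2 * z / (-Real.log (x * y ^ 2 * z ^ 3)))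
      = (1 / 50) * Real.log (2187 / 512) := by
  calc _ = ∫ z in (0:ℝ)..1, ∫ y in (0:ℝ)..1,
          y ^ 2 * z * ∫ t in Ioi (0:ℝ), (y ^ 2 * z ^ 3) ^ t / (t + 4) :=
        intervalIntegral.integral_congr_Ioo_of_le zero_le_one fun z hz =>
          intervalIntegral.integral_congr_Ioo_of_le zero_le_one fun y hy => integral_dx hy hz
    _ = ∫ z in (0:ℝ)..1, z * ∫ t in Ioi (0:ℝ), (z ^ 3) ^ t / ((t + 4) * (2 * t + 3)) :=
        intervalIntegral.integral_congr_Ioo_of_le zero_le_one fun z hz => integral_dy hz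
    _ = ∫ t in Ioi (0:ℝ), 1 / ((t + 4) * (2 * t + 3) * (3 * t + 2)) := integral_dz
    _ = (1 / 50) * Real.log (2187 / 512) := integral_Ioi_one_div_linear_factors
end

section
/- ∫_0^∞ ∫_0^∞ e^{−x−y} sin(x+y) / (2x+y) dx dy = (log 2)/2, and ∫_0^∞ ∫_0^∞ e^{−x−y} cos(x+y) / (2x+y) dx dy = (log 2)/2. -/
/-!
Substituting `u = x + y` turns the double integral of `f (x + y) / (2 * x + y)` into
`∫∫_{0 < x < u} f u / (x + u)`, and the inner integral `∫_0^u dx / (x + u)` equals `log 2`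
for every `u > 0`; the same computation gives `∫∫ |f u| / (x + u) = log 2 * ∫ |f|`, which
justifies Fubini. Hence the double integral is `log 2 * ∫_0^∞ f`. For `f u = e^{-u} cos u` and
`f u = e^{-u} sin u` the last integral is the real or imaginary part of
`∫_0^∞ e^{(-1 + i) u} du = (1 + i) / 2`.
-/

open MeasureTheory Real Set Function

lemma setIntegral_Ioi_zero_comp_add_left (φ : ℝ → ℝ) (x : ℝ) :
    ∫ y in Ioi 0, φ (x + y) = ∫ u in Ioi x, φ u := by
  rw [← (measurePreserving_add_left volume x).setIntegral_preimage_emb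
      (MeasurableEquiv.addLeft x).measurableEmbedding φ (Ioi x)]
  congr 1
  ext y
  simp

lemma integral_Ioo_inv_add_self {u : ℝ} (hu : 0 < u) :
    ∫ x in Ioo 0 u, (x + u)⁻¹ = log 2 := by
  rw [← integral_Ioc_eq_integral_Ioo, ← intervalIntegral.integral_of_le hu.le,
    intervalIntegral.integral_comp_add_right (fun t => t⁻¹) u,
    integral_inv_of_pos (by linarith) (by linarith), zero_add, ← two_mul,
    mul_div_cancel_right₀ _ hu.ne']

lemma integrableOn_Ioo_inv_add_self {u : ℝ} (hu : 0 < u) :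
    IntegrableOn (fun x => (x + u)⁻¹) (Ioo 0 u) := by
  refine (ContinuousOn.integrableOn_Icc ?_).mono_set Ioo_subset_Icc_self
  exact (continuousOn_id.add continuousOn_const).inv₀ fun x hx => (by simp; linarith [hx.1])

noncomputable def invAddKernel (x u : ℝ) : ℝ :=
  (Iio u).indicator (fun x => (x + u)⁻¹) x

lemma invAddKernel_eq_indicator_Ioi (x u : ℝ) :
    invAddKernel x u = (Ioi x).indicator (fun u => (x + u)⁻¹) u := by
  simp only [invAddKernel, indicator, mem_Iio, mem_Ioi]

lemma invAddKernel_nonneg {x u : ℝ} (hx : 0 ≤ x) (hu : 0 ≤ u) : 0 ≤ invAddKernel x u :=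
  by unfold invAddKernel indicator; split_ifs <;> positivity

lemma measurable_invAddKernel : Measurable (uncurry invAddKernel) := by
  have : uncurry invAddKernel = {p : ℝ × ℝ | p.1 < p.2}.indicator (fun p => (p.1 + p.2)⁻¹) := by
    ext ⟨x, u⟩
    simp only [uncurry, invAddKernel, indicator, mem_Iio, mem_ofPred_eq]
  rw [this]
  exact (measurable_fst.add measurable_snd).inv.indicator
    (measurableSet_lt measurable_fst measurable_snd)

lemma integrableOn_invAddKernel {u : ℝ} (hu : 0 < u) :
    IntegrableOn (invAddKernel · u) (Ioi 0) := by
  unfold invAddKernel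
  rw [IntegrableOn, integrable_indicator_iff measurableSet_Iio,
    IntegrableOn, Measure.restrict_restrict measurableSet_Iio, Iio_inter_Ioi]
  exact integrableOn_Ioo_inv_add_self hu

lemma integral_invAddKernel {u : ℝ} (hu : 0 < u) :
    ∫ x in Ioi 0, invAddKernel x u = log 2 := by
  unfold invAddKernel
  rw [setIntegral_indicator measurableSet_Iio, Ioi_inter_Iio]
  exact integral_Ioo_inv_add_self hu

section

variable {f : ℝ → ℝ}

lemma integral_Ioi_div_two_mul_add_eq_integral_mul_invAddKernel {x : ℝ} (hx : 0 < x) :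
    ∫ y in Ioi 0, f (x + y) / (2 * x + y) = ∫ u in Ioi 0, f u * invAddKernel x u := by
  simp_rw [invAddKernel_eq_indicator_Ioi, ← indicator_mul_right]
  rw [setIntegral_indicator measurableSet_Ioi, inter_eq_right.2 (Ioi_subset_Ioi hx.le),
    ← setIntegral_Ioi_zero_comp_add_left _ x]
  congr with y
  rw [div_eq_mul_inv, ← add_assoc, ← two_mul]

lemma integral_norm_mul_invAddKernel {u : ℝ} (hu : 0 < u) :
    ∫ x in Ioi 0, ‖f u * invAddKernel x u‖ = ‖f u‖ * log 2 := by
  rw [← integral_invAddKernel hu, ← integral_const_mul]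
  refine setIntegral_congr_fun measurableSet_Ioi fun x hx => ?_
  rw [norm_mul, Real.norm_of_nonneg (invAddKernel_nonneg (le_of_lt hx) hu.le)]

lemma integrable_mul_invAddKernel (hf : IntegrableOn f (Ioi 0)) :
    Integrable (uncurry fun x u => f u * invAddKernel x u)
      ((volume.restrict (Ioi 0)).prod (volume.restrict (Ioi 0))) := by
  have hmeas : AEStronglyMeasurable (uncurry fun x u => f u * invAddKernel x u)
      ((volume.restrict (Ioi 0)).prod (volume.restrict (Ioi 0))) :=
    hf.aestronglyMeasurable.comp_snd.mul measurable_invAddKernel.aestronglyMeasurable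
  rw [integrable_prod_iff' hmeas]
  constructor
  · filter_upwards [ae_restrict_mem measurableSet_Ioi] with u hu
    exact (integrableOn_invAddKernel hu).const_mul (f u)
  · refine (hf.norm.mul_const (log 2)).congr ?_
    filter_upwards [ae_restrict_mem measurableSet_Ioi] with u hu
    exact (integral_norm_mul_invAddKernel hu).symm

theorem integral_Ioi_integral_Ioi_div_two_mul_add (hf : IntegrableOn f (Ioi 0)) :
    ∫ x in Ioi 0, ∫ y in Ioi 0, f (x + y) / (2 * x + y) = log 2 * ∫ u in Ioi 0, f u :=
  calc ∫ x in Ioi 0, ∫ y in Ioi 0, f (x + y) / (2 * x + y)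
      = ∫ x in Ioi 0, ∫ u in Ioi 0, f u * invAddKernel x u :=
        setIntegral_congr_fun measurableSet_Ioi fun _ hx =>
          integral_Ioi_div_two_mul_add_eq_integral_mul_invAddKernel hx
    _ = ∫ u in Ioi 0, ∫ x in Ioi 0, f u * invAddKernel x u :=
        integral_integral_swap (integrable_mul_invAddKernel hf)
    _ = ∫ u in Ioi 0, log 2 * f u :=
        setIntegral_congr_fun measurableSet_Ioi fun _ hu => by
          rw [integral_const_mul, integral_invAddKernel hu, mul_comm]
    _ = log 2 * ∫ u in Ioi 0, f u := integral_const_mul _ _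

end

lemma integrableOn_cexp_neg_one_add_I_mul :
    IntegrableOn (fun u : ℝ => Complex.exp ((-1 + Complex.I) * u)) (Ioi 0) :=
  integrableOn_exp_mul_complex_Ioi (by simp) 0

lemma integral_cexp_neg_one_add_I_mul :
    ∫ u in Ioi (0 : ℝ), Complex.exp ((-1 + Complex.I) * u) = (1 + Complex.I) / 2 := by
  have hne : -1 + Complex.I ≠ 0 := fun h => by simpa using congrArg Complex.re h
  rw [integral_exp_mul_complex_Ioi (by simp), Complex.ofReal_zero, mul_zero, Complex.exp_zero,
    div_eq_div_iff hne two_ne_zero]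
  linear_combination -Complex.I_sq

lemma re_cexp_neg_one_add_I_mul (u : ℝ) :
    (Complex.exp ((-1 + Complex.I) * u)).re = exp (-u) * cos u := by
  simp [Complex.exp_re]

lemma im_cexp_neg_one_add_I_mul (u : ℝ) :
    (Complex.exp ((-1 + Complex.I) * u)).im = exp (-u) * sin u := by
  simp [Complex.exp_im]

lemma integrableOn_exp_neg_mul_cos : IntegrableOn (fun u => exp (-u) * cos u) (Ioi 0) := by
  simpa only [IntegrableOn, RCLike.re_to_complex, re_cexp_neg_one_add_I_mul] using
    integrableOn_cexp_neg_one_add_I_mul.re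

lemma integrableOn_exp_neg_mul_sin : IntegrableOn (fun u => exp (-u) * sin u) (Ioi 0) := by
  simpa only [IntegrableOn, RCLike.im_to_complex, im_cexp_neg_one_add_I_mul] using
    integrableOn_cexp_neg_one_add_I_mul.im

lemma integral_exp_neg_mul_cos : ∫ u in Ioi 0, exp (-u) * cos u = 1 / 2 := by
  have h := integral_re integrableOn_cexp_neg_one_add_I_mul
  simp only [RCLike.re_to_complex, re_cexp_neg_one_add_I_mul] at h
  rw [h, integral_cexp_neg_one_add_I_mul]
  simp

lemma integral_exp_neg_mul_sin : ∫ u in Ioi 0, exp (-u) * sin u = 1 / 2 := by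
  have h := integral_im integrableOn_cexp_neg_one_add_I_mul
  simp only [RCLike.im_to_complex, im_cexp_neg_one_add_I_mul] at h
  rw [h, integral_cexp_neg_one_add_I_mul]
  simp

theorem double_integral_log_two :
    (∫ x in Set.Ioi (0:ℝ), ∫ y in Set.Ioi (0:ℝ),
        Real.exp (-x - y) * Real.sin (x + y) / (2 * x + y)) = Real.log 2 / 2 ∧
    (∫ x in Set.Ioi (0:ℝ), ∫ y in Set.Ioi (0:ℝ),
        Real.exp (-x - y) * Real.cos (x + y) / (2 * x + y)) = Real.log 2 / 2 := by
  have hsin := integral_Ioi_integral_Ioi_div_two_mul_add integrableOn_exp_neg_mul_sin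
  have hcos := integral_Ioi_integral_Ioi_div_two_mul_add integrableOn_exp_neg_mul_cos
  simp only [neg_add'] at hsin hcos
  rw [hsin, hcos, integral_exp_neg_mul_sin, integral_exp_neg_mul_cos]
  constructor <;> ring
end

section
/- ∫_0^1 (x² − 1)/((1 + x³) log x) dx = log( Γ(1/6) / (√π · Γ(2/3)) ). -/
/-!
Expand `1 / (1 + x ^ 3) = ∑ (-x ^ 3) ^ n`. Writing `(x ^ 2 - 1) / log x = ∫₀² x ^ s ds` and
swapping the integrals gives `∫₀¹ x ^ (3n) (x ^ 2 - 1) / log x dx = log ((3n + 3) / (3n + 1))`;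
since `(x ^ 2 - 1) / log x` is bounded on `(0, 1)` and the geometric partial sums are bounded,
dominated convergence integrates the series termwise. Grouping the alternating series in pairs
yields `log ∏ (k + 1/2)(k + 2/3) / ((k + 1/6)(k + 1))`, and since `1/2 + 2/3 = 1/6 + 1`,
Euler's limit formula for `Γ` evaluates the product as `Γ(1/6) Γ(1) / (Γ(1/2) Γ(2/3))`,
with `Γ(1/2) = √π`.
-/

open MeasureTheory Real Set Filter Topology

theorem integral_const_rpow_add {x : ℝ} (hx0 : 0 < x) (hx1 : x ≠ 1) (b c : ℝ) :
    ∫ s in (0:ℝ)..b, x ^ (s + c) = x ^ c * ((x ^ b - 1) / log x) := by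
  have hlog : log x ≠ 0 := log_ne_zero_of_pos_of_ne_one hx0 hx1
  have hderiv (s : ℝ) : HasDerivAt (fun s => x ^ (s + c) / log x) (x ^ (s + c)) s := by
    have := ((hasStrictDerivAt_const_rpow hx0 (s + c)).hasDerivAt.comp s
      ((hasDerivAt_id s).add_const c)).div_const (log x)
    simpa [hlog] using this
  rw [intervalIntegral.integral_eq_sub_of_hasDerivAt (fun s _ => hderiv s)
    ((continuous_const.rpow (continuous_id.add continuous_const)
      (fun _ => Or.inl hx0.ne')).intervalIntegrable _ _), rpow_add hx0]
  simp only [zero_add]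
  ring

theorem integral_rpow_mul_rpow_sub_one_div_log {b c : ℝ} (hb : 0 ≤ b) (hc : 0 ≤ c) :
    ∫ x in Ioo (0:ℝ) 1, x ^ c * ((x ^ b - 1) / log x) = log ((c + b + 1) / (c + 1)) := by
  have hF : Integrable (Function.uncurry fun x s : ℝ => x ^ (s + c))
      ((volume.restrict (Ioo 0 1)).prod (volume.restrict (Ioc 0 b))) := by
    refine Integrable.mono' (integrable_const 1)
      (measurable_fst.pow (measurable_snd.add_const c)).aestronglyMeasurable ?_
    rw [Measure.prod_restrict]
    filter_upwards [ae_restrict_mem (measurableSet_Ioo.prod measurableSet_Ioc)]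
      with ⟨x, s⟩ ⟨⟨hx0, hx1⟩, hs0, _⟩
    rw [Function.uncurry_apply_pair, Real.norm_of_nonneg (rpow_nonneg hx0.le _)]
    exact rpow_le_one hx0.le hx1.le (by linarith)
  calc ∫ x in Ioo (0:ℝ) 1, x ^ c * ((x ^ b - 1) / log x)
      = ∫ x in Ioo (0:ℝ) 1, ∫ s in Ioc 0 b, x ^ (s + c) :=
        setIntegral_congr_fun measurableSet_Ioo fun x hx => by
          rw [← intervalIntegral.integral_of_le hb, integral_const_rpow_add hx.1 hx.2.ne]
    _ = ∫ s in Ioc 0 b, ∫ x in Ioo (0:ℝ) 1, x ^ (s + c) := integral_integral_swap hF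
    _ = ∫ s in Ioc 0 b, (s + (c + 1))⁻¹ :=
        setIntegral_congr_fun measurableSet_Ioc fun s hs => by
          rw [← integral_Ioc_eq_integral_Ioo, ← intervalIntegral.integral_of_le zero_le_one,
            integral_rpow (Or.inl (by linarith [hs.1])), one_rpow,
            zero_rpow (by linarith [hs.1])]
          ring
    _ = log ((c + b + 1) / (c + 1)) := by
        rw [← intervalIntegral.integral_of_le hb,
          intervalIntegral.integral_comp_add_right (fun u => u⁻¹),
          integral_inv_of_pos (by linarith) (by linarith)]
        ring_nf

theorem integral_pow_mul_sq_sub_one_div_log (n : ℕ) :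
    ∫ x in Ioo (0:ℝ) 1, x ^ n * ((x ^ 2 - 1) / log x) = log ((n + 3) / (n + 1)) := by
  have := integral_rpow_mul_rpow_sub_one_div_log zero_le_two n.cast_nonneg
  simp only [rpow_natCast, rpow_two] at this
  rw [this]
  ring_nf

theorem abs_sq_sub_one_div_log_le_two {x : ℝ} (hx0 : 0 < x) (hx1 : x < 1) :
    |(x ^ 2 - 1) / log x| ≤ 2 := by
  have hlog : log x < 0 := log_neg hx0 hx1
  have := log_le_sub_one_of_pos hx0
  rw [abs_of_nonneg (div_nonneg_of_nonpos (by nlinarith) hlog.le), div_le_iff_of_neg hlog]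
  nlinarith

theorem abs_geom_sum_le_two {r : ℝ} (hr0 : r ≤ 0) (hr1 : -1 ≤ r) (n : ℕ) :
    |∑ i ∈ Finset.range n, r ^ i| ≤ 2 := by
  rw [geom_sum_eq (by linarith) n, abs_div, abs_of_neg (by linarith : r - 1 < 0),
    div_le_iff₀ (by linarith)]
  have : |r ^ n| ≤ 1 := by
    rw [abs_pow]
    exact pow_le_one₀ (abs_nonneg r) (abs_le.2 ⟨hr1, by linarith⟩)
  calc |r ^ n - 1| ≤ |r ^ n| + 1 := by simpa using abs_sub (r ^ n) 1
    _ ≤ 2 * -(r - 1) := by linarith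

theorem integrableOn_mul_sq_sub_one_div_log {f : ℝ → ℝ} (hf : Measurable f) {C : ℝ}
    (hC : ∀ x ∈ Ioo (0:ℝ) 1, |f x| ≤ C) :
    IntegrableOn (fun x => f x * ((x ^ 2 - 1) / log x)) (Ioo 0 1) := by
  refine Measure.integrableOn_of_bounded (M := C * 2) measure_Ioo_lt_top.ne
    (by fun_prop) ?_
  filter_upwards [ae_restrict_mem measurableSet_Ioo] with x hx
  rw [norm_mul, Real.norm_eq_abs, Real.norm_eq_abs]
  exact mul_le_mul (hC x hx) (abs_sq_sub_one_div_log_le_two hx.1 hx.2) (abs_nonneg _)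
    ((abs_nonneg _).trans (hC x hx))

theorem tendsto_sum_neg_one_pow_mul_log :
    Tendsto (fun M => ∑ n ∈ Finset.range M, (-1) ^ n * log ((3 * n + 3) / (3 * n + 1)))
      atTop (𝓝 (∫ x in Ioo (0:ℝ) 1, (x ^ 2 - 1) / ((1 + x ^ 3) * log x))) := by
  have hterm (n : ℕ) : ∫ x in Ioo (0:ℝ) 1, (-x ^ 3) ^ n * ((x ^ 2 - 1) / log x)
      = (-1) ^ n * log ((3 * n + 3) / (3 * n + 1)) := by
    simp_rw [neg_pow (_ ^ 3), ← pow_mul, mul_assoc]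
    rw [integral_const_mul, integral_pow_mul_sq_sub_one_div_log]
    push_cast
    ring_nf
  have hint (n : ℕ) : IntegrableOn (fun x => (-x ^ 3) ^ n * ((x ^ 2 - 1) / log x)) (Ioo 0 1) :=
    integrableOn_mul_sq_sub_one_div_log (by fun_prop) (C := 1) fun x hx => by
      rw [abs_pow, abs_neg, abs_pow, abs_of_pos hx.1]
      exact pow_le_one₀ (pow_nonneg hx.1.le 3) (pow_le_one₀ hx.1.le hx.2.le)
  simp_rw [← hterm, ← integral_finsetSum _ fun n _ => hint n, ← Finset.sum_mul]
  refine tendsto_integral_of_dominated_convergence (fun _ => 2 * 2) (fun M => ?_)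
    (integrable_const _) (fun M => ?_) ?_
  · fun_prop
  · filter_upwards [ae_restrict_mem measurableSet_Ioo] with x hx
    rw [norm_mul, Real.norm_eq_abs, Real.norm_eq_abs]
    exact mul_le_mul (abs_geom_sum_le_two (by have := pow_pos hx.1 3; linarith)
      (by have := pow_le_one₀ hx.1.le hx.2.le (n := 3); linarith) M)
      (abs_sq_sub_one_div_log_le_two hx.1 hx.2) (abs_nonneg _) zero_le_two
  · filter_upwards [ae_restrict_mem measurableSet_Ioo] with x hx
    have hx3 : |-x ^ 3| < 1 := by
      rw [abs_neg, abs_pow, abs_of_pos hx.1]; exact pow_lt_one₀ hx.1.le hx.2 three_ne_zero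
    have := ((hasSum_geometric_of_abs_lt_one hx3).tendsto_sum_nat).mul_const ((x ^ 2 - 1) / log x)
    convert this using 2
    rw [sub_neg_eq_add]
    field_simp

theorem Finset.sum_range_two_mul {M : Type*} [AddCommMonoid M] (f : ℕ → M) (n : ℕ) :
    ∑ i ∈ Finset.range (2 * n), f i
      = ∑ k ∈ Finset.range n, (f (2 * k) + f (2 * k + 1)) := by
  induction n with
  | zero => simp
  | succ n ih =>
    rw [Nat.mul_succ, Finset.sum_range_succ, Finset.sum_range_succ, Finset.sum_range_succ, ih,
      add_assoc]

theorem sum_range_two_mul_neg_one_pow_mul_log (N : ℕ) :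
    ∑ n ∈ Finset.range (2 * N), (-1) ^ n * log ((3 * n + 3) / (3 * n + 1))
      = log (∏ k ∈ Finset.range N, (1 / 2 + k) * (2 / 3 + k) / ((1 / 6 + k) * (1 + k))) := by
  rw [Finset.sum_range_two_mul, log_prod fun k _ => by positivity]
  refine Finset.sum_congr rfl fun k _ => ?_
  rw [pow_succ, pow_mul, neg_one_sq, one_pow, one_mul, one_mul, neg_one_mul, ← sub_eq_add_neg,
    ← log_div (by positivity) (by positivity)]
  congr 1
  push_cast
  field_simp
  ring

theorem tendsto_prod_div_Gamma {a b c d : ℝ} (ha : 0 < a) (hb : 0 < b) (hc : 0 < c)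
    (hd : 0 < d) (habcd : a + b = c + d) :
    Tendsto (fun n : ℕ => ∏ k ∈ Finset.range n, (a + k) * (b + k) / ((c + k) * (d + k)))
      atTop (𝓝 (Gamma c * Gamma d / (Gamma a * Gamma b))) := by
  have hlim := ((GammaSeq_tendsto_Gamma c).mul (GammaSeq_tendsto_Gamma d)).div
    ((GammaSeq_tendsto_Gamma a).mul (GammaSeq_tendsto_Gamma b))
    (mul_pos (Gamma_pos_of_pos ha) (Gamma_pos_of_pos hb)).ne'
  refine (tendsto_add_atTop_iff_nat 1).mp (hlim.congr' ?_)
  filter_upwards [eventually_gt_atTop 0] with n hn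
  have hn : (0 : ℝ) < n := Nat.cast_pos.2 hn
  have hpow : (n : ℝ) ^ a * (n : ℝ) ^ b = (n : ℝ) ^ c * (n : ℝ) ^ d := by
    rw [← rpow_add hn, ← rpow_add hn, habcd]
  -- The `(n + 1)`-st partial product is `GammaSeq c n * GammaSeq d n / (GammaSeq a n *
  -- GammaSeq b n)`: the factorials cancel, and so do the powers of `n` because `a + b = c + d`.
  simp only [Pi.div_apply, GammaSeq, Finset.prod_div_distrib, Finset.prod_mul_distrib]
  field_simp
  rw [hpow]

theorem integral_gamma_example :
    (∫ x in (0:ℝ)..1, (x ^ 2 - 1) / ((1 + x ^ 3) * Real.log x))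
      = Real.log (Real.Gamma (1 / 6) / (Real.sqrt π * Real.Gamma (2 / 3))) := by
  have hprod := tendsto_prod_div_Gamma (a := 1 / 2) (b := 2 / 3) (c := 1 / 6) (d := 1)
    (by norm_num) (by norm_num) (by norm_num) one_pos (by norm_num)
  have hΓ : 0 < Gamma (1 / 6) * Gamma 1 / (Gamma (1 / 2) * Gamma (2 / 3)) := by
    have := Gamma_pos_of_pos (by norm_num : (0:ℝ) < 1 / 6)
    have := Gamma_pos_of_pos (by norm_num : (0:ℝ) < 1 / 2)
    have := Gamma_pos_of_pos (by norm_num : (0:ℝ) < 2 / 3)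
    positivity
  have heven : Tendsto
      (fun N => ∑ n ∈ Finset.range (2 * N), (-1) ^ n * log ((3 * n + 3) / (3 * n + 1)))
      atTop (𝓝 (log (Gamma (1 / 6) * Gamma 1 / (Gamma (1 / 2) * Gamma (2 / 3))))) := by
    simp_rw [sum_range_two_mul_neg_one_pow_mul_log]
    exact ((continuousAt_log hΓ.ne').tendsto).comp hprod
  rw [intervalIntegral.integral_of_le zero_le_one, integral_Ioc_eq_integral_Ioo,
    tendsto_nhds_unique (tendsto_sum_neg_one_pow_mul_log.comp
      (tendsto_id.const_mul_atTop' two_pos)) heven,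
    Gamma_one, mul_one, Gamma_one_half_eq]
end

section
/- γ = −∫_0^1 ∫_0^1 (1−x)/((1−xy)·log(xy)) dx dy, where γ is the Euler–Mascheroni constant. -/
open MeasureTheory Real Set Filter Topology
open scoped ENNReal

/-!
For `0 < u < 1`, `1 / ((1 - u) (-log u)) = ∑ₙ ∫₀^∞ u^(n + t) dt` (a geometric series times
`∫₀^∞ u^t dt = -1 / log u`). Taking `u = x y` and integrating term by term (Tonelli),
`∫₀¹∫₀¹ (1 - x) (x y)^s dx dy = 1 / ((s + 1)² (s + 2))`, and with `s = n + t` the `t`-integral is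
`1 / (n + 1) - log (1 + 1 / (n + 1))`. These terms telescope to `H_N - log (N + 1) → γ`.
-/

lemma integral_rpow_Ioo_zero_one {a : ℝ} (ha : -1 < a) :
    ∫ x in Ioo (0 : ℝ) 1, x ^ a = (a + 1)⁻¹ := by
  rw [← integral_Ioc_eq_integral_Ioo, ← intervalIntegral.integral_of_le zero_le_one,
    integral_rpow (Or.inl ha), one_rpow, zero_rpow (by linarith), sub_zero, one_div]

lemma integrableOn_rpow_Ioo_zero_one {a : ℝ} (ha : -1 < a) :
    IntegrableOn (fun x : ℝ ↦ x ^ a) (Ioo 0 1) :=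
  (intervalIntegral.intervalIntegrable_rpow' ha).1.mono_set Ioo_subset_Ioc_self

lemma lintegral_rpow_Ioo_zero_one {a : ℝ} (ha : -1 < a) :
    ∫⁻ x in Ioo (0 : ℝ) 1, ENNReal.ofReal (x ^ a) = ENNReal.ofReal (a + 1)⁻¹ := by
  rw [← integral_rpow_Ioo_zero_one ha, ofReal_integral_eq_lintegral_ofReal
    (integrableOn_rpow_Ioo_zero_one ha)]
  filter_upwards [ae_restrict_mem measurableSet_Ioo] with x hx using rpow_nonneg hx.1.le a

lemma lintegral_one_sub_mul_rpow_Ioo_zero_one {a : ℝ} (ha : -1 < a) :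
    ∫⁻ x in Ioo (0 : ℝ) 1, ENNReal.ofReal ((1 - x) * x ^ a) =
      ENNReal.ofReal ((a + 1) * (a + 2))⁻¹ := by
  have hsplit : EqOn (fun x : ℝ ↦ (1 - x) * x ^ a) (fun x ↦ x ^ a - x ^ (a + 1)) (Ioo 0 1) :=
    fun x hx ↦ by simp only [rpow_add_one hx.1.ne']; ring
  have hint : IntegrableOn (fun x : ℝ ↦ x ^ a - x ^ (a + 1)) (Ioo 0 1) :=
    (integrableOn_rpow_Ioo_zero_one ha).sub (integrableOn_rpow_Ioo_zero_one (by linarith))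
  have hval : ∫ x in Ioo (0 : ℝ) 1, (x ^ a - x ^ (a + 1)) = ((a + 1) * (a + 2))⁻¹ := by
    rw [integral_sub (integrableOn_rpow_Ioo_zero_one ha)
      (integrableOn_rpow_Ioo_zero_one (by linarith)), integral_rpow_Ioo_zero_one ha,
      integral_rpow_Ioo_zero_one (by linarith), add_assoc, one_add_one_eq_two]
    have : a + 1 ≠ 0 := by linarith
    have : a + 2 ≠ 0 := by linarith
    field_simp
    ring
  rw [setLIntegral_congr_fun measurableSet_Ioo fun x hx ↦ congrArg ENNReal.ofReal (hsplit hx),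
    ← hval, ofReal_integral_eq_lintegral_ofReal hint]
  filter_upwards [ae_restrict_mem measurableSet_Ioo] with x hx
  simpa using rpow_le_rpow_of_exponent_ge hx.1 hx.2.le (le_add_of_nonneg_right zero_le_one)

lemma lintegral_rpow_Ioi_zero {u : ℝ} (h0 : 0 < u) (h1 : u < 1) :
    ∫⁻ t in Ioi (0 : ℝ), ENNReal.ofReal (u ^ t) = ENNReal.ofReal (-log u)⁻¹ := by
  have hlog : log u < 0 := log_neg h0 h1
  simp_rw [rpow_def_of_pos h0]
  rw [← ofReal_integral_eq_lintegral_ofReal (integrableOn_exp_mul_Ioi hlog 0)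
    (ae_of_all _ fun t ↦ (exp_pos _).le), integral_exp_mul_Ioi hlog, mul_zero, exp_zero,
    neg_div, ← div_neg, one_div]

lemma tsum_lintegral_rpow_add_Ioi_zero {u : ℝ} (h0 : 0 < u) (h1 : u < 1) :
    ∑' n : ℕ, ∫⁻ t in Ioi (0 : ℝ), ENNReal.ofReal (u ^ ((n : ℝ) + t)) =
      ENNReal.ofReal ((1 - u) * -log u)⁻¹ := by
  have hterm : ∀ n : ℕ, ∫⁻ t in Ioi (0 : ℝ), ENNReal.ofReal (u ^ ((n : ℝ) + t)) =
      ENNReal.ofReal u ^ n * ENNReal.ofReal (-log u)⁻¹ := fun n ↦ by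
    simp_rw [rpow_add h0, rpow_natCast, ENNReal.ofReal_mul (pow_nonneg h0.le n),
      ENNReal.ofReal_pow h0.le]
    rw [lintegral_const_mul' _ _ (ENNReal.pow_ne_top ENNReal.ofReal_ne_top),
      lintegral_rpow_Ioi_zero h0 h1]
  rw [tsum_congr hterm, ENNReal.tsum_mul_right, ENNReal.tsum_geometric, ← ENNReal.ofReal_one,
    ← ENNReal.ofReal_sub _ h0.le, ← ENNReal.ofReal_inv_of_pos (by linarith),
    ← ENNReal.ofReal_mul (inv_nonneg.2 (by linarith)), mul_inv]

lemma hasDerivAt_log_one_add_inv_sub_inv {w : ℝ} (hw : 0 < w) :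
    HasDerivAt (fun w ↦ log (1 + w⁻¹) - w⁻¹) (w ^ 2 * (w + 1))⁻¹ w := by
  have hinv := hasDerivAt_inv hw.ne'
  have hlog := ((hinv.const_add 1).log (by positivity))
  refine (hlog.fun_sub hinv).congr_deriv ?_
  field_simp
  ring

lemma lintegral_Ioi_inv_sq_mul_inv_add_one {b : ℝ} (hb : 0 < b) :
    ∫⁻ t in Ioi (0 : ℝ), ENNReal.ofReal ((b + t) ^ 2 * (b + t + 1))⁻¹ =
      ENNReal.ofReal (b⁻¹ - log (1 + b⁻¹)) := by
  set G : ℝ → ℝ := fun t ↦ log (1 + (b + t)⁻¹) - (b + t)⁻¹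
  have hderiv : ∀ t ∈ Ici (0 : ℝ), HasDerivAt G ((b + t) ^ 2 * (b + t + 1))⁻¹ t := fun t ht ↦
    (hasDerivAt_log_one_add_inv_sub_inv (by linarith [mem_Ici.mp ht])).comp_const_add b t
  have hpos : ∀ t ∈ Ioi (0 : ℝ), 0 ≤ ((b + t) ^ 2 * (b + t + 1))⁻¹ := fun t ht ↦ by
    have : 0 < b + t := by linarith [mem_Ioi.mp ht]
    positivity
  have hlim : Tendsto G atTop (𝓝 0) := by
    have hinv : Tendsto (fun t : ℝ ↦ (b + t)⁻¹) atTop (𝓝 0) :=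
      (tendsto_atTop_add_const_left atTop b tendsto_id).inv_tendsto_atTop
    have hlog : Tendsto (fun t : ℝ ↦ log (1 + (b + t)⁻¹)) atTop (𝓝 0) := by
      simpa [Function.comp_def] using
        (continuousAt_log one_ne_zero).tendsto.comp (by simpa using hinv.const_add 1)
    simpa using hlog.sub hinv
  rw [← ofReal_integral_eq_lintegral_ofReal (integrableOn_Ioi_deriv_of_nonneg' hderiv hpos hlim)
    ((ae_restrict_mem measurableSet_Ioi).mono hpos),
    integral_Ioi_of_hasDerivAt_of_nonneg' hderiv hpos hlim]
  simp only [G, add_zero, zero_sub, neg_sub]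

lemma sum_range_inv_sub_log_one_add_inv (N : ℕ) :
    ∑ n ∈ Finset.range N, (((n : ℝ) + 1)⁻¹ - log (1 + ((n : ℝ) + 1)⁻¹)) =
      eulerMascheroniSeq N := by
  induction N with
  | zero => simp [eulerMascheroniSeq_zero]
  | succ N ih =>
    have hN : (0 : ℝ) < N + 1 := by positivity
    rw [Finset.sum_range_succ, ih, eulerMascheroniSeq, eulerMascheroniSeq, harmonic_succ,
      show 1 + ((N : ℝ) + 1)⁻¹ = (N + 1 + 1) / (N + 1) by field_simp,
      log_div (by positivity) hN.ne']
    push_cast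
    ring

lemma inv_sub_log_one_add_inv_nonneg {b : ℝ} (hb : 0 < b) : 0 ≤ b⁻¹ - log (1 + b⁻¹) := by
  linarith [log_le_sub_one_of_pos (by positivity : 0 < 1 + b⁻¹)]

lemma hasSum_inv_sub_log_one_add_inv :
    HasSum (fun n : ℕ ↦ ((n : ℝ) + 1)⁻¹ - log (1 + ((n : ℝ) + 1)⁻¹))
      eulerMascheroniConstant := by
  refine (hasSum_iff_tendsto_nat_of_nonneg
    (fun n ↦ inv_sub_log_one_add_inv_nonneg (by positivity)) _).mpr ?_
  simpa only [sum_range_inv_sub_log_one_add_inv] using tendsto_eulerMascheroniSeq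

lemma lintegral_lintegral_tsum_lintegral_comm {α β γ : Type*} [MeasurableSpace α]
    [MeasurableSpace β] [MeasurableSpace γ] {μ : Measure α} {ν : Measure β} {ρ : Measure γ}
    [SFinite μ] [SFinite ν] [SFinite ρ] {f : ℕ → γ → α → β → ℝ≥0∞}
    (hf : ∀ n, Measurable fun p : γ × α × β ↦ f n p.1 p.2.1 p.2.2) :
    ∫⁻ y, ∫⁻ x, ∑' n, ∫⁻ t, f n t x y ∂ρ ∂μ ∂ν =
      ∑' n, ∫⁻ t, ∫⁻ y, ∫⁻ x, f n t x y ∂μ ∂ν ∂ρ := by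
  have hxy : ∀ n, Measurable fun q : α × β ↦ ∫⁻ t, f n t q.1 q.2 ∂ρ := fun n ↦
    ((hf n).comp (f := fun q : (α × β) × γ ↦ (q.2, q.1)) (by fun_prop)).lintegral_prod_right'
  have hy : ∀ n, Measurable fun y ↦ ∫⁻ x, ∫⁻ t, f n t x y ∂ρ ∂μ := fun n ↦
    ((hxy n).comp (f := Prod.swap) (by fun_prop)).lintegral_prod_right'
  have hinner : ∀ y, ∫⁻ x, ∑' n, ∫⁻ t, f n t x y ∂ρ ∂μ = ∑' n, ∫⁻ x, ∫⁻ t, f n t x y ∂ρ ∂μ :=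
    fun y ↦ lintegral_tsum fun n ↦
      ((hxy n).comp (f := fun x : α ↦ (x, y)) (by fun_prop)).aemeasurable
  rw [lintegral_congr hinner, lintegral_tsum fun n ↦ (hy n).aemeasurable]
  refine tsum_congr fun n ↦ ?_
  have hswap : ∀ y, ∫⁻ x, ∫⁻ t, f n t x y ∂ρ ∂μ = ∫⁻ t, ∫⁻ x, f n t x y ∂μ ∂ρ := fun y ↦
    lintegral_lintegral_swap
      ((hf n).comp (f := fun q : α × γ ↦ (q.2, q.1, y)) (by fun_prop)).aemeasurable
  rw [lintegral_congr hswap]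
  exact lintegral_lintegral_swap
    ((hf n).comp (f := fun q : (β × γ) × α ↦ (q.1.2, q.2, q.1.1))
      (by fun_prop)).lintegral_prod_right'.aemeasurable

lemma ofReal_div_mul_neg_log_eq_tsum_lintegral {x y : ℝ} (hx : x ∈ Ioo (0 : ℝ) 1)
    (hy : y ∈ Ioo (0 : ℝ) 1) :
    ENNReal.ofReal ((1 - x) / ((1 - x * y) * -log (x * y))) =
      ∑' n : ℕ, ∫⁻ t in Ioi (0 : ℝ),
        ENNReal.ofReal ((1 - x) * x ^ ((n : ℝ) + t)) * ENNReal.ofReal (y ^ ((n : ℝ) + t)) := by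
  have hu0 : 0 < x * y := mul_pos hx.1 hy.1
  have hu1 : x * y < 1 := mul_lt_one_of_nonneg_of_lt_one_left hx.1.le hx.2 hy.2.le
  have hx1 : 0 ≤ 1 - x := sub_nonneg.2 hx.2.le
  have hsplit : ∀ s : ℝ, ENNReal.ofReal ((1 - x) * x ^ s) * ENNReal.ofReal (y ^ s) =
      ENNReal.ofReal (1 - x) * ENNReal.ofReal ((x * y) ^ s) := fun s ↦ by
    rw [ENNReal.ofReal_mul hx1, mul_assoc, ← ENNReal.ofReal_mul (rpow_nonneg hx.1.le s),
      mul_rpow hx.1.le hy.1.le]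
  simp_rw [hsplit, lintegral_const_mul' _ _ ENNReal.ofReal_ne_top, ENNReal.tsum_mul_left,
    tsum_lintegral_rpow_add_Ioi_zero hu0 hu1, ← ENNReal.ofReal_mul hx1, div_eq_mul_inv]

lemma lintegral_lintegral_one_sub_mul_rpow_mul_rpow {s : ℝ} (hs : -1 < s) :
    ∫⁻ y in Ioo (0 : ℝ) 1, ∫⁻ x in Ioo (0 : ℝ) 1,
        ENNReal.ofReal ((1 - x) * x ^ s) * ENNReal.ofReal (y ^ s) =
      ENNReal.ofReal ((s + 1) ^ 2 * (s + 2))⁻¹ := by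
  have hpos : 0 ≤ ((s + 1) * (s + 2))⁻¹ := inv_nonneg.2 (mul_pos (by linarith) (by linarith)).le
  simp_rw [lintegral_mul_const' _ _ ENNReal.ofReal_ne_top,
    lintegral_one_sub_mul_rpow_Ioo_zero_one hs, lintegral_const_mul' _ _ ENNReal.ofReal_ne_top,
    lintegral_rpow_Ioo_zero_one hs, ← ENNReal.ofReal_mul hpos, ← mul_inv]
  ring_nf

lemma lintegral_lintegral_one_sub_div_mul_neg_log :
    ∫⁻ y in Ioo (0 : ℝ) 1, ∫⁻ x in Ioo (0 : ℝ) 1,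
        ENNReal.ofReal ((1 - x) / ((1 - x * y) * -log (x * y))) =
      ENNReal.ofReal eulerMascheroniConstant := by
  have hmeas : ∀ n : ℕ, Measurable fun p : ℝ × ℝ × ℝ ↦
      ENNReal.ofReal ((1 - p.2.1) * p.2.1 ^ ((n : ℝ) + p.1)) *
        ENNReal.ofReal (p.2.2 ^ ((n : ℝ) + p.1)) := fun n ↦ by fun_prop
  have hterm : ∀ n : ℕ, ∫⁻ t in Ioi (0 : ℝ), ∫⁻ y in Ioo (0 : ℝ) 1, ∫⁻ x in Ioo (0 : ℝ) 1,
        ENNReal.ofReal ((1 - x) * x ^ ((n : ℝ) + t)) * ENNReal.ofReal (y ^ ((n : ℝ) + t)) =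
      ENNReal.ofReal (((n : ℝ) + 1)⁻¹ - log (1 + ((n : ℝ) + 1)⁻¹)) := fun n ↦ by
    rw [← lintegral_Ioi_inv_sq_mul_inv_add_one (by positivity)]
    refine setLIntegral_congr_fun measurableSet_Ioi fun t ht ↦ ?_
    have hs : -1 < (n : ℝ) + t := by linarith [mem_Ioi.1 ht, (n.cast_nonneg : (0 : ℝ) ≤ n)]
    rw [lintegral_lintegral_one_sub_mul_rpow_mul_rpow hs]
    ring_nf
  calc _ = ∫⁻ y in Ioo (0 : ℝ) 1, ∫⁻ x in Ioo (0 : ℝ) 1, ∑' n : ℕ, ∫⁻ t in Ioi (0 : ℝ),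
        ENNReal.ofReal ((1 - x) * x ^ ((n : ℝ) + t)) * ENNReal.ofReal (y ^ ((n : ℝ) + t)) :=
        setLIntegral_congr_fun measurableSet_Ioo fun y hy ↦
          setLIntegral_congr_fun measurableSet_Ioo fun x hx ↦
            ofReal_div_mul_neg_log_eq_tsum_lintegral hx hy
    _ = ∑' n : ℕ, ENNReal.ofReal (((n : ℝ) + 1)⁻¹ - log (1 + ((n : ℝ) + 1)⁻¹)) := by
        rw [lintegral_lintegral_tsum_lintegral_comm hmeas]
        exact tsum_congr hterm
    _ = ENNReal.ofReal eulerMascheroniConstant := by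
        rw [← hasSum_inv_sub_log_one_add_inv.tsum_eq, ENNReal.ofReal_tsum_of_nonneg
          (fun n ↦ inv_sub_log_one_add_inv_nonneg (by positivity))
          hasSum_inv_sub_log_one_add_inv.summable]

lemma integral_integral_eq_of_lintegral_lintegral_eq_ofReal {α β : Type*} [MeasurableSpace α]
    [MeasurableSpace β] {μ : Measure α} {ν : Measure β} [SFinite μ] {F : α → β → ℝ}
    (hF : Measurable (Function.uncurry F)) (hF0 : ∀ᵐ y ∂ν, ∀ᵐ x ∂μ, 0 ≤ F x y) {c : ℝ}
    (hc : 0 ≤ c) (h : ∫⁻ y, ∫⁻ x, ENNReal.ofReal (F x y) ∂μ ∂ν = ENNReal.ofReal c) :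
    ∫ y, ∫ x, F x y ∂μ ∂ν = c := by
  have hmeas : Measurable fun y ↦ ∫⁻ x, ENNReal.ofReal (F x y) ∂μ :=
    hF.ennreal_ofReal.lintegral_prod_left'
  have hinner : ∀ᵐ y ∂ν, ∫ x, F x y ∂μ = (∫⁻ x, ENNReal.ofReal (F x y) ∂μ).toReal := by
    filter_upwards [hF0] with y hy
    exact integral_eq_lintegral_of_nonneg_ae hy
      (hF.comp (f := fun x ↦ (x, y)) (by fun_prop)).aestronglyMeasurable
  rw [integral_congr_ae hinner, integral_toReal hmeas.aemeasurable
    (ae_lt_top hmeas (h ▸ ENNReal.ofReal_ne_top)), h, ENNReal.toReal_ofReal hc]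

theorem sondow_gamma_integral :
    Real.eulerMascheroniConstant =
      -∫ y in (0:ℝ)..1, ∫ x in (0:ℝ)..1, (1 - x) / ((1 - x * y) * Real.log (x * y)) := by
  have hF0 : ∀ᵐ y ∂volume.restrict (Ioo (0 : ℝ) 1), ∀ᵐ x ∂volume.restrict (Ioo (0 : ℝ) 1),
      0 ≤ (1 - x) / ((1 - x * y) * -log (x * y)) := by
    filter_upwards [ae_restrict_mem measurableSet_Ioo] with y hy
    filter_upwards [ae_restrict_mem measurableSet_Ioo] with x hx
    have hu1 : x * y < 1 := mul_lt_one_of_nonneg_of_lt_one_left hx.1.le hx.2 hy.2.le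
    have hlog : log (x * y) < 0 := log_neg (mul_pos hx.1 hy.1) hu1
    exact div_nonneg (by linarith [hx.2]) (mul_nonneg (by linarith) (by linarith))
  have hmain := integral_integral_eq_of_lintegral_lintegral_eq_ofReal (by fun_prop) hF0
    (by linarith [one_half_lt_eulerMascheroniConstant])
    lintegral_lintegral_one_sub_div_mul_neg_log
  simp_rw [intervalIntegral.integral_of_le zero_le_one, integral_Ioc_eq_integral_Ioo, ← hmain,
    mul_neg, div_neg, integral_neg]
end

section
/- For every integer s ≥ 2, ζ(s)·Γ(s) = ∫_0^1 ∫_0^1 (−s)·(−log y)^{s−1} / ((1−xy)·log(xy)) dx dy. -/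
/-!
Substituting `u = x y` turns the inner integral into `s (-log y)^(s-1) G(y) / y`, where
`G(y) = ∫₀^y du / ((1 - u)(-log u))`. After `y = e^{-t}` the outer integral becomes
`∫₀^∞ s t^(s-1) G(e^{-t}) dt`, and since `d/dt G(e^{-t}) = -1 / (t (e^t - 1))`, an integration by
parts turns it into the Bose integral `∫₀^∞ t^(s-1) / (e^t - 1) dt`; the boundary terms vanish
because `0 ≤ G(e^{-t}) ≤ 1 / (e^t - 1)`. Expanding `1 / (e^t - 1) = ∑ e^{-(n+1) t}` and integrating
termwise gives `∑ Γ(s) / (n+1)^s = Γ(s) ζ(s)`.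
-/

open MeasureTheory Real Set Filter Topology

lemma hasSum_rpow_mul_exp_neg_mul_nat_add_one {t : ℝ} (ht : 0 < t) (s : ℝ) :
    HasSum (fun n : ℕ ↦ t ^ (s - 1) * exp (-((n + 1) * t))) (t ^ (s - 1) / (exp t - 1)) := by
  have hq : exp (-t) < 1 := exp_lt_one_iff.mpr (neg_lt_zero.mpr ht)
  have hterm : (fun n : ℕ ↦ t ^ (s - 1) * exp (-((n + 1) * t))) =
      fun n ↦ t ^ (s - 1) * exp (-t) * exp (-t) ^ n := by
    ext n
    rw [mul_assoc, ← exp_nat_mul, ← exp_add]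
    ring_nf
  have hval : t ^ (s - 1) / (exp t - 1) = t ^ (s - 1) * exp (-t) * (1 - exp (-t))⁻¹ := by
    have : exp t - 1 ≠ 0 := (sub_pos.mpr (one_lt_exp_iff.mpr ht)).ne'
    rw [exp_neg]
    field_simp
  rw [hterm, hval]
  exact (hasSum_geometric_of_lt_one (exp_pos _).le hq).mul_left _

lemma integral_rpow_mul_exp_neg_mul_nat_add_one {s : ℝ} (hs : 0 < s) (n : ℕ) :
    ∫ t in Ioi 0, t ^ (s - 1) * exp (-((n + 1) * t)) = 1 / (n + 1) ^ s * Gamma s := by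
  rw [integral_rpow_mul_exp_neg_mul_Ioi hs (by positivity), div_rpow zero_le_one (by positivity),
    one_rpow]

lemma integrableOn_rpow_mul_exp_neg_mul {a r : ℝ} (ha : -1 < a) (hr : 0 < r) :
    IntegrableOn (fun t ↦ t ^ a * exp (-(r * t))) (Ioi 0) := by
  simpa only [rpow_one, neg_mul] using integrableOn_rpow_mul_exp_neg_mul_rpow ha one_pos hr

theorem riemannZeta_mul_Gamma_eq_integral {s : ℝ} (hs : 1 < s) :
    riemannZeta s * Complex.Gamma s = ((∫ t in Ioi 0, t ^ (s - 1) / (exp t - 1) : ℝ) : ℂ) := by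
  have hs0 : 0 < s := zero_lt_one.trans hs
  have hnorm (n : ℕ) : ∫ t in Ioi 0, ‖t ^ (s - 1) * exp (-((n + 1) * t))‖ =
      1 / (n + 1) ^ s * Gamma s := by
    rw [← integral_rpow_mul_exp_neg_mul_nat_add_one hs0]
    exact setIntegral_congr_fun measurableSet_Ioi fun t ht ↦
      norm_of_nonneg (mul_nonneg (rpow_nonneg (le_of_lt ht) _) (exp_pos _).le)
  have hsummable : Summable fun n : ℕ ↦ 1 / ((n : ℝ) + 1) ^ s * Gamma s := by
    refine (((Real.summable_one_div_nat_add_rpow 1 s).mpr hs).congr fun n ↦ ?_).mul_right _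
    rw [abs_of_nonneg (by positivity)]
  have hsum : HasSum (fun n : ℕ ↦ 1 / ((n : ℝ) + 1) ^ s * Gamma s)
      (∫ t in Ioi 0, t ^ (s - 1) / (exp t - 1)) := by
    have key := hasSum_integral_of_summable_integral_norm
      (F := fun (n : ℕ) t ↦ t ^ (s - 1) * exp (-((n + 1) * t))) (μ := volume.restrict (Ioi 0))
      (fun n ↦ integrableOn_rpow_mul_exp_neg_mul (by linarith) (by positivity))
      (by simpa only [hnorm] using hsummable)
    simp only [integral_rpow_mul_exp_neg_mul_nat_add_one hs0] at key
    rwa [setIntegral_congr_fun measurableSet_Ioi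
      fun t ht ↦ (hasSum_rpow_mul_exp_neg_mul_nat_add_one ht s).tsum_eq] at key
  rw [zeta_eq_tsum_one_div_nat_add_one_cpow (by simpa using hs), ← tsum_mul_right,
    ← (Complex.hasSum_ofReal.mpr hsum).tsum_eq, Complex.Gamma_ofReal]
  congr 1 with n
  push_cast [Complex.ofReal_cpow (by positivity : (0 : ℝ) ≤ n + 1)]
  rfl

lemma inv_exp_sub_one_le {t : ℝ} (ht : 0 < t) : (exp t - 1)⁻¹ ≤ exp (-(t / 2)) / t := by
  have hsinh : exp t - 1 = 2 * sinh (t / 2) * exp (t / 2) := by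
    have h1 : exp t = exp (t / 2) * exp (t / 2) := by rw [← exp_add, add_halves]
    have h2 : exp (-(t / 2)) * exp (t / 2) = 1 := by rw [← exp_add, neg_add_cancel, exp_zero]
    rw [sinh_eq]
    linear_combination h1 + h2
  have hle : t * exp (t / 2) ≤ exp t - 1 := by
    rw [hsinh]
    have := self_lt_sinh_iff.mpr (half_pos ht)
    nlinarith [exp_pos (t / 2)]
  calc (exp t - 1)⁻¹ ≤ (t * exp (t / 2))⁻¹ := inv_anti₀ (by positivity) hle
    _ = exp (-(t / 2)) / t := by rw [exp_neg]; field_simp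

lemma norm_rpow_mul_le_of_norm_le_inv_exp_sub_one {f : ℝ → ℝ}
    (hf : ∀ t ∈ Ioi (0 : ℝ), ‖f t‖ ≤ (exp t - 1)⁻¹) (s : ℝ) {t : ℝ} (ht : 0 < t) :
    ‖t ^ s * f t‖ ≤ t ^ (s - 1) * exp (-(t / 2)) := by
  rw [norm_mul, norm_of_nonneg (rpow_nonneg ht.le _), rpow_sub_one ht.ne', div_mul_eq_mul_div,
    mul_div_assoc]
  exact mul_le_mul_of_nonneg_left ((hf t ht).trans (inv_exp_sub_one_le ht)) (by positivity)

lemma integrableOn_rpow_mul_of_norm_le_inv_exp_sub_one {f : ℝ → ℝ}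
    (hf : ∀ t ∈ Ioi (0 : ℝ), ‖f t‖ ≤ (exp t - 1)⁻¹) {s : ℝ} (hs : 1 < s)
    (hfm : AEStronglyMeasurable f (volume.restrict (Ioi 0))) :
    IntegrableOn (fun t ↦ t ^ (s - 1) * f t) (Ioi 0) := by
  have hmeas : Measurable fun t : ℝ ↦ t ^ (s - 1) := by fun_prop
  refine (integrableOn_rpow_mul_exp_neg_mul (a := s - 1 - 1) (by linarith)
    (inv_pos.mpr two_pos)).mono' (hmeas.aestronglyMeasurable.mul hfm) ?_
  filter_upwards [self_mem_ae_restrict measurableSet_Ioi] with t ht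
  convert norm_rpow_mul_le_of_norm_le_inv_exp_sub_one hf (s - 1) ht using 3
  ring

lemma tendsto_rpow_mul_nhdsGT_zero_of_norm_le_inv_exp_sub_one {f : ℝ → ℝ}
    (hf : ∀ t ∈ Ioi (0 : ℝ), ‖f t‖ ≤ (exp t - 1)⁻¹) {s : ℝ} (hs : 1 < s) :
    Tendsto (fun t ↦ t ^ s * f t) (𝓝[>] 0) (𝓝 0) := by
  refine squeeze_zero_norm' (eventually_nhdsWithin_of_forall fun t ht ↦
    norm_rpow_mul_le_of_norm_le_inv_exp_sub_one hf s ht) ?_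
  have hcont : ContinuousAt (fun t : ℝ ↦ t ^ (s - 1) * exp (-(t / 2))) 0 :=
    (continuousAt_rpow_const _ _ (Or.inr (by linarith))).mul (by fun_prop)
  simpa [zero_rpow (by linarith : s - 1 ≠ 0)] using hcont.tendsto.mono_left nhdsWithin_le_nhds

lemma tendsto_rpow_mul_atTop_of_norm_le_inv_exp_sub_one {f : ℝ → ℝ}
    (hf : ∀ t ∈ Ioi (0 : ℝ), ‖f t‖ ≤ (exp t - 1)⁻¹) (s : ℝ) :
    Tendsto (fun t ↦ t ^ s * f t) atTop (𝓝 0) := by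
  refine squeeze_zero_norm' ((eventually_gt_atTop 0).mono fun t ht ↦
    norm_rpow_mul_le_of_norm_le_inv_exp_sub_one hf s ht) ?_
  convert tendsto_rpow_mul_exp_neg_mul_atTop_nhds_zero (s - 1) 2⁻¹ (inv_pos.mpr two_pos) using 4
  ring

lemma integral_Ioo_zero_one_div_eq_integral_Ioi_exp_neg (h : ℝ → ℝ) :
    ∫ y in Ioo 0 1, h y / y = ∫ t in Ioi 0, h (exp (-t)) := by
  have himage : (fun t ↦ exp (-t)) '' Ioi 0 = Ioo 0 1 := by
    ext y
    constructor
    · rintro ⟨t, ht, rfl⟩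
      exact ⟨exp_pos _, exp_lt_one_iff.mpr (neg_lt_zero.mpr ht)⟩
    · rintro ⟨h0, h1⟩
      exact ⟨-log y, neg_pos.mpr (log_neg h0 h1), by simp [exp_log h0]⟩
  rw [← himage, integral_image_eq_integral_abs_deriv_smul measurableSet_Ioi
    (fun t _ ↦ (hasDerivAt_neg t).exp.hasDerivWithinAt)
    (fun a _ b _ hab ↦ neg_injective (exp_injective hab))]
  refine setIntegral_congr_fun measurableSet_Ioi fun t _ ↦ ?_
  rw [smul_eq_mul, abs_mul, abs_neg, abs_one, mul_one, abs_of_pos (exp_pos _),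
    mul_div_cancel₀ _ (exp_pos _).ne']

noncomputable def logKernel (u : ℝ) : ℝ := ((1 - u) * -log u)⁻¹

noncomputable def logKernelIntegral (y : ℝ) : ℝ := ∫ u in (0 : ℝ)..y, logKernel u

lemma measurable_logKernel : Measurable logKernel := by
  unfold logKernel; fun_prop

lemma logKernel_nonneg {u : ℝ} (h0 : 0 ≤ u) (h1 : u ≤ 1) : 0 ≤ logKernel u :=
  inv_nonneg.mpr (mul_nonneg (by linarith) (neg_nonneg.mpr (log_nonpos h0 h1)))

lemma logKernel_le {u : ℝ} (h0 : 0 ≤ u) (h1 : u < 1) : logKernel u ≤ ((1 - u) ^ 2)⁻¹ := by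
  rcases h0.eq_or_lt with rfl | hu
  · simp [logKernel]
  · have hlog : 1 - u ≤ -log u := by linarith [log_le_sub_one_of_pos hu]
    exact inv_anti₀ (by nlinarith) (by nlinarith)

lemma continuousAt_logKernel {u : ℝ} (hu : u ∈ Ioo (0 : ℝ) 1) : ContinuousAt logKernel u :=
  ((continuousAt_const.sub continuousAt_id).mul (continuousAt_log hu.1.ne').neg).inv₀
    (mul_pos (sub_pos.mpr hu.2) (neg_pos.mpr (log_neg hu.1 hu.2))).ne'

lemma continuousOn_inv_one_sub_sq : ContinuousOn (fun u : ℝ ↦ ((1 - u) ^ 2)⁻¹) (Iio 1) :=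
  fun _ hu ↦ (((continuousAt_const.sub continuousAt_id).pow 2).inv₀
    (pow_pos (sub_pos.mpr hu) 2).ne').continuousWithinAt

lemma uIcc_zero_subset_Iio_one {y : ℝ} (hy : y < 1) : uIcc 0 y ⊆ Iio 1 :=
  fun _ hu ↦ lt_of_le_of_lt hu.2 (max_lt one_pos hy)

lemma integral_inv_one_sub_sq {y : ℝ} (hy : y < 1) :
    ∫ u in (0 : ℝ)..y, ((1 - u) ^ 2)⁻¹ = (1 - y)⁻¹ - 1 := by
  have hderiv : ∀ u < 1, HasDerivAt (fun v : ℝ ↦ (1 - v)⁻¹) ((1 - u) ^ 2)⁻¹ u := fun u hu ↦ by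
    simpa using ((hasDerivAt_id u).const_sub 1).fun_inv (sub_pos.mpr hu).ne'
  rw [intervalIntegral.integral_eq_sub_of_hasDerivAt
    (fun u hu ↦ hderiv u (uIcc_zero_subset_Iio_one hy hu))
    ((continuousOn_inv_one_sub_sq.mono (uIcc_zero_subset_Iio_one hy)).intervalIntegrable)]
  norm_num

lemma intervalIntegrable_logKernel {y : ℝ} (h0 : 0 ≤ y) (h1 : y < 1) :
    IntervalIntegrable logKernel volume 0 y := by
  refine ((continuousOn_inv_one_sub_sq.mono (uIcc_zero_subset_Iio_one h1)).intervalIntegrable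
    ).mono_fun measurable_logKernel.aestronglyMeasurable ?_
  rw [uIoc_of_le h0]
  filter_upwards [self_mem_ae_restrict measurableSet_Ioc] with u hu
  rw [norm_of_nonneg (logKernel_nonneg hu.1.le (by linarith [hu.2])),
    norm_of_nonneg (by positivity)]
  exact logKernel_le hu.1.le (by linarith [hu.2])

lemma hasDerivAt_logKernelIntegral {y : ℝ} (hy : y ∈ Ioo (0 : ℝ) 1) :
    HasDerivAt logKernelIntegral (logKernel y) y :=
  intervalIntegral.integral_hasDerivAt_right (intervalIntegrable_logKernel hy.1.le hy.2)
    measurable_logKernel.stronglyMeasurable.stronglyMeasurableAtFilter (continuousAt_logKernel hy)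

lemma logKernelIntegral_nonneg {y : ℝ} (h0 : 0 ≤ y) (h1 : y < 1) : 0 ≤ logKernelIntegral y :=
  intervalIntegral.integral_nonneg h0 fun _ hu ↦ logKernel_nonneg hu.1 (hu.2.trans h1.le)

lemma logKernelIntegral_le {y : ℝ} (h0 : 0 ≤ y) (h1 : y < 1) :
    logKernelIntegral y ≤ (1 - y)⁻¹ - 1 := by
  rw [← integral_inv_one_sub_sq h1]
  refine intervalIntegral.integral_mono_on h0 (intervalIntegrable_logKernel h0 h1)
    ((continuousOn_inv_one_sub_sq.mono (uIcc_zero_subset_Iio_one h1)).intervalIntegrable) ?_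
  exact fun u hu ↦ logKernel_le hu.1 (hu.2.trans_lt h1)

lemma logKernel_exp_neg_mul_exp_neg (t : ℝ) :
    logKernel (exp (-t)) * exp (-t) = (t * (exp t - 1))⁻¹ := by
  rw [logKernel, log_exp, neg_neg, ← inv_inv (exp (-t)), ← mul_inv, exp_neg, inv_inv]
  congr 1
  have := exp_pos t
  field_simp

lemma norm_logKernelIntegral_exp_neg_le {t : ℝ} (ht : 0 < t) :
    ‖logKernelIntegral (exp (-t))‖ ≤ (exp t - 1)⁻¹ := by
  have hy : exp (-t) < 1 := exp_lt_one_iff.mpr (neg_lt_zero.mpr ht)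
  rw [norm_of_nonneg (logKernelIntegral_nonneg (exp_pos _).le hy)]
  refine (logKernelIntegral_le (exp_pos _).le hy).trans_eq ?_
  have : exp t - 1 ≠ 0 := (sub_pos.mpr (one_lt_exp_iff.mpr ht)).ne'
  rw [exp_neg]
  field_simp
  ring

lemma hasDerivAt_logKernelIntegral_exp_neg {t : ℝ} (ht : 0 < t) :
    HasDerivAt (fun t ↦ logKernelIntegral (exp (-t))) (-(t * (exp t - 1))⁻¹) t := by
  have hy : exp (-t) ∈ Ioo (0 : ℝ) 1 := ⟨exp_pos _, exp_lt_one_iff.mpr (neg_lt_zero.mpr ht)⟩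
  have h := (hasDerivAt_logKernelIntegral hy).comp t (hasDerivAt_neg t).exp
  rwa [mul_neg_one, mul_neg, logKernel_exp_neg_mul_exp_neg] at h

lemma integral_mul_rpow_mul_logKernelIntegral_exp_neg {s : ℝ} (hs : 1 < s) :
    ∫ t in Ioi 0, s * t ^ (s - 1) * logKernelIntegral (exp (-t)) =
      ∫ t in Ioi 0, t ^ (s - 1) / (exp t - 1) := by
  have hv : ∀ t ∈ Ioi (0 : ℝ), ‖logKernelIntegral (exp (-t))‖ ≤ (exp t - 1)⁻¹ :=
    fun t ht ↦ norm_logKernelIntegral_exp_neg_le ht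
  have hw : ∀ t ∈ Ioi (0 : ℝ), ‖(exp t - 1)⁻¹‖ ≤ (exp t - 1)⁻¹ :=
    fun t ht ↦ (norm_of_nonneg (inv_nonneg.mpr (sub_nonneg.mpr (one_le_exp (le_of_lt ht))))).le
  have huv' : ∀ t ∈ Ioi (0 : ℝ),
      t ^ s * -(t * (exp t - 1))⁻¹ = -(t ^ (s - 1) / (exp t - 1)) := fun t ht ↦ by
    rw [rpow_sub_one (ne_of_gt ht)]
    field_simp
  have hvm : AEStronglyMeasurable (fun t ↦ logKernelIntegral (exp (-t)))
      (volume.restrict (Ioi 0)) :=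
    (continuousOn_of_forall_continuousAt fun t ht ↦
      (hasDerivAt_logKernelIntegral_exp_neg ht).continuousAt).aestronglyMeasurable measurableSet_Ioi
  have key := integral_Ioi_mul_deriv_eq_deriv_mul (u := fun t ↦ t ^ s)
    (fun t ht ↦ hasDerivAt_rpow_const (Or.inl (ne_of_gt ht)))
    (fun t ht ↦ hasDerivAt_logKernelIntegral_exp_neg ht)
    (((integrableOn_rpow_mul_of_norm_le_inv_exp_sub_one hw hs
      (by fun_prop : Measurable fun t : ℝ ↦ (exp t - 1)⁻¹).aestronglyMeasurable).neg).congr_fun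
      (fun t ht ↦ (huv' t ht).symm) measurableSet_Ioi)
    (by simpa only [Pi.mul_def, mul_assoc, IntegrableOn] using
      (integrableOn_rpow_mul_of_norm_le_inv_exp_sub_one hv hs hvm).const_mul s)
    (tendsto_rpow_mul_nhdsGT_zero_of_norm_le_inv_exp_sub_one hv hs)
    (tendsto_rpow_mul_atTop_of_norm_le_inv_exp_sub_one hv s)
  rw [setIntegral_congr_fun measurableSet_Ioi huv', MeasureTheory.integral_neg, sub_self,
    zero_sub, neg_inj] at key
  exact key.symm

lemma integral_div_one_sub_mul_mul_log_mul (c : ℝ) {y : ℝ} (hy : y ≠ 0) :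
    ∫ x in (0 : ℝ)..1, c / ((1 - x * y) * log (x * y)) = -(c * logKernelIntegral y / y) := by
  have hintegrand (u : ℝ) : c / ((1 - u) * log u) = -(c * logKernel u) := by
    rw [logKernel, mul_neg, inv_neg, mul_neg, neg_neg, div_eq_mul_inv]
  simp_rw [hintegrand]
  rw [intervalIntegral.integral_comp_mul_right (fun u ↦ -(c * logKernel u)) hy,
    intervalIntegral.integral_neg, intervalIntegral.integral_const_mul]
  simp only [zero_mul, one_mul, smul_eq_mul, logKernelIntegral]
  field_simp

theorem zeta_gamma_double_integral (s : ℕ) (hs : 2 ≤ s) :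
    riemannZeta s * Complex.Gamma s =
      ((∫ y in (0:ℝ)..1, ∫ x in (0:ℝ)..1,
          (-(s : ℝ)) * (-Real.log y) ^ (s - 1) / ((1 - x * y) * Real.log (x * y))) : ℝ) := by
  have hs' : (1 : ℝ) < s := by exact_mod_cast hs
  have hpow (y : ℝ) : y ^ (s - 1) = y ^ ((s : ℝ) - 1) := by
    rw [← rpow_natCast, Nat.cast_sub (by omega : 1 ≤ s), Nat.cast_one]
  calc riemannZeta s * Complex.Gamma s
      = ((∫ t in Ioi 0, t ^ ((s : ℝ) - 1) / (exp t - 1) : ℝ) : ℂ) := by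
        exact_mod_cast riemannZeta_mul_Gamma_eq_integral hs'
    _ = ((∫ t in Ioi 0, s * (-log (exp (-t))) ^ ((s : ℝ) - 1) * logKernelIntegral (exp (-t))
          : ℝ) : ℂ) := by
        simp only [log_exp, neg_neg, integral_mul_rpow_mul_logKernelIntegral_exp_neg hs']
    _ = ((∫ y in Ioo 0 1, s * (-log y) ^ ((s : ℝ) - 1) * logKernelIntegral y / y : ℝ) : ℂ) := by
        rw [integral_Ioo_zero_one_div_eq_integral_Ioi_exp_neg
          (fun y ↦ s * (-log y) ^ ((s : ℝ) - 1) * logKernelIntegral y)]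
    _ = _ := by
        rw [intervalIntegral.integral_of_le zero_le_one, integral_Ioc_eq_integral_Ioo]
        congr 1
        refine setIntegral_congr_fun measurableSet_Ioo fun y hy ↦ ?_
        rw [integral_div_one_sub_mul_mul_log_mul _ hy.1.ne', hpow]
        ring
end

section
/- ζ(3) = (−3/2) · ∫_0^1 ∫_0^1 (log y)² / ((1−xy)·log(xy)) dx dy. -/
/-!
Substituting `u = x y` in the inner integral turns it into `(log y)² / y · ∫₀^y du / ((1 - u) log u)`.
The integrand of the resulting iterated integral over the triangle `0 < u ≤ y ≤ 1` has constant
sign, so Fubini lets us integrate in `y` first; since `∫ᵤ¹ (log y)² / y dy = -(log u)³ / 3`, the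
double integral equals `-(1/3) ∫₀¹ (log u)² / (1 - u) du`. Expanding `1 / (1 - u)` as a geometric
series and using `∫₀¹ uⁿ (log u)² du = 2 / (n + 1)³` evaluates the last integral as `2 ζ(3)`.
-/

open MeasureTheory Real Filter Set intervalIntegral Topology

theorem tendsto_pow_mul_log_pow_nhdsGT_zero {n : ℕ} (hn : n ≠ 0) (k : ℕ) :
    Tendsto (fun u : ℝ => u ^ n * log u ^ k) (𝓝[>] 0) (𝓝 0) := by
  rcases k.eq_zero_or_pos with rfl | hk
  · simpa using ((continuous_pow n).tendsto' 0 0 (zero_pow hn)).mono_left nhdsWithin_le_nhds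
  have h := (tendsto_log_mul_rpow_nhdsGT_zero (r := n / k) (by positivity)).pow k
  rw [zero_pow hk.ne'] at h
  refine h.congr' ?_
  filter_upwards [self_mem_nhdsWithin] with u (hu : 0 < u)
  rw [mul_pow, ← rpow_natCast (u ^ _), ← rpow_mul hu.le, div_mul_cancel₀ _ (by positivity),
    rpow_natCast, mul_comm]

noncomputable def powMulLogSqPrimitive (n : ℕ) (u : ℝ) : ℝ :=
  u ^ (n + 1) * (log u ^ 2 / (n + 1) - 2 * log u / (n + 1) ^ 2 + 2 / (n + 1) ^ 3)

theorem hasDerivAt_powMulLogSqPrimitive (n : ℕ) {u : ℝ} (hu : u ≠ 0) :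
    HasDerivAt (powMulLogSqPrimitive n) (u ^ n * log u ^ 2) u := by
  have := (hasDerivAt_pow (n + 1) u).fun_mul
    (((((hasDerivAt_log hu).fun_pow 2).div_const ((n:ℝ) + 1)).fun_sub
      (((hasDerivAt_log hu).const_mul 2).div_const (((n:ℝ) + 1) ^ 2))).add_const
        (2 / ((n:ℝ) + 1) ^ 3))
  refine this.congr_deriv ?_
  simp only [Nat.add_sub_cancel]
  field_simp
  push_cast
  ring

theorem continuousOn_powMulLogSqPrimitive (n : ℕ) :
    ContinuousOn (powMulLogSqPrimitive n) (Icc 0 1) := by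
  intro u hu
  rcases hu.1.eq_or_lt with rfl | hu0
  · have h0 : Tendsto (powMulLogSqPrimitive n) (𝓝[>] 0) (𝓝 (powMulLogSqPrimitive n 0)) := by
      have := (((tendsto_pow_mul_log_pow_nhdsGT_zero n.succ_ne_zero 2).div_const ((n:ℝ) + 1)).sub
        (((tendsto_pow_mul_log_pow_nhdsGT_zero n.succ_ne_zero 1).const_mul 2).div_const
          (((n:ℝ) + 1) ^ 2))).add
        ((tendsto_pow_mul_log_pow_nhdsGT_zero n.succ_ne_zero 0).mul_const (2 / ((n:ℝ) + 1) ^ 3))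
      convert this using 2 <;> simp [powMulLogSqPrimitive]
      ring
    exact (continuousWithinAt_Ioi_iff_Ici.1 h0).mono Icc_subset_Ici_self
  · exact (hasDerivAt_powMulLogSqPrimitive n hu0.ne').continuousAt.continuousWithinAt

theorem intervalIntegrable_pow_mul_log_sq (n : ℕ) :
    IntervalIntegrable (fun u : ℝ => u ^ n * log u ^ 2) volume 0 1 := by
  refine intervalIntegrable_deriv_of_nonneg (g := powMulLogSqPrimitive n)
    (by simpa using continuousOn_powMulLogSqPrimitive n) (fun u hu => ?_) (fun u hu => ?_)
  all_goals have hu0 : 0 < u := by simpa using hu.1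
  · exact hasDerivAt_powMulLogSqPrimitive n hu0.ne'
  · exact mul_nonneg (pow_nonneg hu0.le n) (sq_nonneg _)

theorem integral_pow_mul_log_sq (n : ℕ) :
    ∫ u in (0:ℝ)..1, u ^ n * log u ^ 2 = 2 / ((n:ℝ) + 1) ^ 3 := by
  rw [integral_eq_sub_of_hasDerivAt_of_le zero_le_one (continuousOn_powMulLogSqPrimitive n)
    (fun u hu => hasDerivAt_powMulLogSqPrimitive n hu.1.ne') (intervalIntegrable_pow_mul_log_sq n)]
  simp [powMulLogSqPrimitive]

theorem summable_one_div_nat_add_one_pow {k : ℕ} (hk : 1 < k) :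
    Summable (fun n : ℕ => 1 / ((n:ℝ) + 1) ^ k) := by
  simpa using (summable_nat_add_iff 1).2 (Real.summable_one_div_nat_pow.2 hk)

theorem riemannZeta_natCast_eq_ofReal_tsum {k : ℕ} (hk : 1 < k) :
    riemannZeta k = ((∑' n : ℕ, 1 / ((n:ℝ) + 1) ^ k : ℝ) : ℂ) := by
  rw [zeta_eq_tsum_one_div_nat_add_one_cpow (by simpa using hk), Complex.ofReal_tsum]
  push_cast
  simp [Complex.cpow_natCast]

theorem integral_log_sq_div_one_sub :
    ∫ u in (0:ℝ)..1, log u ^ 2 / (1 - u) = 2 * ∑' n : ℕ, 1 / ((n:ℝ) + 1) ^ 3 := by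
  have hterm (n : ℕ) : ∫ u in Ioc (0:ℝ) 1, u ^ n * log u ^ 2 = 2 * (1 / ((n:ℝ) + 1) ^ 3) := by
    rw [← integral_of_le zero_le_one, integral_pow_mul_log_sq n]
    ring
  have hsum : HasSum (fun n : ℕ => ∫ u in Ioc (0:ℝ) 1, u ^ n * log u ^ 2)
      (∫ u in Ioc (0:ℝ) 1, ∑' n : ℕ, u ^ n * log u ^ 2) := by
    refine hasSum_integral_of_summable_integral_norm
      (fun n => (intervalIntegrable_pow_mul_log_sq n).1) ?_
    refine ((summable_one_div_nat_add_one_pow (k := 3) (by norm_num)).mul_left 2).congr fun n => ?_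
    rw [← hterm]
    exact setIntegral_congr_fun measurableSet_Ioc fun u hu =>
      (norm_of_nonneg (mul_nonneg (pow_nonneg hu.1.le n) (sq_nonneg (log u)))).symm
  calc ∫ u in (0:ℝ)..1, log u ^ 2 / (1 - u)
      = ∫ u in Ioc (0:ℝ) 1, ∑' n : ℕ, u ^ n * log u ^ 2 := by
        rw [integral_of_le zero_le_one]
        refine setIntegral_congr_fun measurableSet_Ioc fun u hu => ?_
        rcases hu.2.eq_or_lt with rfl | hu1
        · simp
        · rw [tsum_mul_right, tsum_geometric_of_lt_one hu.1.le hu1, div_eq_inv_mul]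
    _ = 2 * ∑' n : ℕ, 1 / ((n:ℝ) + 1) ^ 3 := by
        rw [← hsum.tsum_eq, tsum_congr hterm, tsum_mul_left]

theorem intervalIntegrable_log_sq_div_one_sub :
    IntervalIntegrable (fun u : ℝ => log u ^ 2 / (1 - u)) volume 0 1 := by
  refine intervalIntegrable_of_integral_ne_zero ?_
  rw [integral_log_sq_div_one_sub]
  have := Summable.tsum_pos (summable_one_div_nat_add_one_pow (k := 3) (by norm_num))
    (fun n => by positivity) 0 (by norm_num)
  positivity

section TriangleFubini

variable {E : Type*} [NormedAddCommGroup E] [NormedSpace ℝ E] {a b : ℝ}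

theorem Ioc_inter_Ici_of_mem {x : ℝ} (hx : x ∈ Ioc a b) : Ioc a b ∩ Ici x = Icc x b := by
  ext y; simp only [mem_inter_iff, mem_Ioc, mem_Ici, mem_Icc]; grind

theorem setIntegral_Ioc_ite_le_right {x : ℝ} (hx : x ∈ Ioc a b) (φ : ℝ → E) :
    ∫ y in Ioc a b, (if x ≤ y then φ y else 0) = ∫ y in x..b, φ y := by
  simp_rw [← mem_Ici, ← indicator_apply, setIntegral_indicator measurableSet_Ici,
    Ioc_inter_Ici_of_mem hx, integral_Icc_eq_integral_Ioc, ← integral_of_le hx.2]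

theorem setIntegral_Ioc_ite_le_left {y : ℝ} (hy : y ∈ Ioc a b) (ψ : ℝ → E) :
    ∫ x in Ioc a b, (if x ≤ y then ψ x else 0) = ∫ x in a..y, ψ x := by
  simp_rw [← mem_Iic, ← indicator_apply, setIntegral_indicator measurableSet_Iic, Ioc_inter_Iic,
    min_eq_right hy.2, ← integral_of_le hy.1.le]

theorem integral_mul_integral_swap (hab : a ≤ b) {f g : ℝ → ℝ}
    (hf : Measurable f) (hg : Measurable g)
    (hg_int : ∀ x ∈ Ioc a b, IntervalIntegrable g volume x b)
    (hfg : IntegrableOn (fun x => ‖f x‖ * ∫ y in x..b, ‖g y‖) (Ioc a b)) :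
    ∫ y in a..b, g y * ∫ x in a..y, f x = ∫ x in a..b, f x * ∫ y in x..b, g y := by
  set μ := volume.restrict (Ioc a b)
  set F : ℝ → ℝ → ℝ := fun x y => if x ≤ y then f x * g y else 0
  have hF_meas : AEStronglyMeasurable (Function.uncurry F) (μ.prod μ) :=
    (Measurable.ite (measurableSet_le measurable_fst measurable_snd)
      ((hf.comp measurable_fst).mul (hg.comp measurable_snd)) measurable_const).aestronglyMeasurable
  have hF : Integrable (Function.uncurry F) (μ.prod μ) := by
    refine (integrable_prod_iff hF_meas).2 ⟨?_, ?_⟩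
    · filter_upwards [ae_restrict_mem measurableSet_Ioc] with x hx
      have hsec : (fun y => F x y) = (Ici x).indicator (fun y => f x * g y) := by
        ext y; simp [F, indicator_apply]
      change Integrable (fun y => F x y) μ
      rw [hsec, integrable_indicator_iff measurableSet_Ici, IntegrableOn,
        Measure.restrict_restrict measurableSet_Ici, inter_comm, Ioc_inter_Ici_of_mem hx]
      exact ((integrableOn_Icc_iff_integrableOn_Ioc (f := g)).2 (hg_int x hx).1).const_mul (f x)
    · refine hfg.congr ?_
      filter_upwards [ae_restrict_mem measurableSet_Ioc] with x hx
      simp only [Function.uncurry_apply_pair, F, apply_ite norm, norm_zero, norm_mul]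
      rw [setIntegral_Ioc_ite_le_right hx, intervalIntegral.integral_const_mul]
  calc ∫ y in a..b, g y * ∫ x in a..y, f x
      = ∫ y, ∫ x, F x y ∂μ ∂μ := by
        rw [integral_of_le hab]
        refine setIntegral_congr_fun measurableSet_Ioc fun y hy => ?_
        rw [setIntegral_Ioc_ite_le_left hy, intervalIntegral.integral_mul_const, mul_comm]
    _ = ∫ x, ∫ y, F x y ∂μ ∂μ := (integral_integral_swap hF).symm
    _ = ∫ x in a..b, f x * ∫ y in x..b, g y := by
        rw [integral_of_le hab]
        refine setIntegral_congr_fun measurableSet_Ioc fun x hx => ?_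
        rw [setIntegral_Ioc_ite_le_right hx, intervalIntegral.integral_const_mul]

end TriangleFubini

theorem integral_log_sq_div_one_sub_mul_mul_log (y : ℝ) :
    ∫ x in (0:ℝ)..1, log y ^ 2 / ((1 - x * y) * log (x * y)) =
      log y ^ 2 / y * ∫ u in (0:ℝ)..y, ((1 - u) * log u)⁻¹ := by
  rcases eq_or_ne y 0 with rfl | hy
  · simp
  have := integral_comp_mul_right (fun u => log y ^ 2 * ((1 - u) * log u)⁻¹) hy (a := 0) (b := 1)
  simp only [zero_mul, one_mul, smul_eq_mul, intervalIntegral.integral_const_mul] at this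
  simp_rw [div_eq_mul_inv (log y ^ 2), intervalIntegral.integral_const_mul, this]
  ring

theorem intervalIntegrable_log_sq_div_self {a b : ℝ} (ha : 0 < a) (hb : 0 < b) :
    IntervalIntegrable (fun y => log y ^ 2 / y) volume a b := by
  refine ContinuousOn.intervalIntegrable fun y hy => ?_
  have hy0 : y ≠ 0 := ((lt_min ha hb).trans_le hy.1).ne'
  exact (((continuousAt_log hy0).pow 2).div continuousAt_id hy0).continuousWithinAt

theorem integral_log_sq_div_self {a b : ℝ} (ha : 0 < a) (hb : 0 < b) :
    ∫ y in a..b, log y ^ 2 / y = (log b ^ 3 - log a ^ 3) / 3 := by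
  rw [integral_eq_sub_of_hasDerivAt (f := fun y => log y ^ 3 / 3) (fun y hy => ?_)
    (intervalIntegrable_log_sq_div_self ha hb), sub_div]
  have hy0 : y ≠ 0 := ((lt_min ha hb).trans_le hy.1).ne'
  refine (((hasDerivAt_log hy0).pow 3).div_const 3).congr_deriv ?_
  field_simp
  ring

theorem inv_one_sub_mul_log_mul_integral_log_sq_div_self {u : ℝ} (hu : 0 < u) :
    ((1 - u) * log u)⁻¹ * ∫ y in u..1, log y ^ 2 / y = -(log u ^ 2 / (1 - u)) / 3 := by
  rw [integral_log_sq_div_self hu one_pos, log_one]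
  rcases eq_or_ne (log u) 0 with hlog | hlog
  · simp [hlog]
  rcases eq_or_ne (1 - u) 0 with hu1 | hu1
  · simp [hu1]
  field_simp
  ring

theorem norm_inv_one_sub_mul_log_mul_integral_norm_log_sq_div_self {u : ℝ} (hu : u ∈ Ioc 0 1) :
    ‖((1 - u) * log u)⁻¹‖ * ∫ y in u..1, ‖log y ^ 2 / y‖ = log u ^ 2 / (1 - u) / 3 := by
  have hneg : (1 - u) * log u ≤ 0 :=
    mul_nonpos_of_nonneg_of_nonpos (sub_nonneg.2 hu.2) (log_nonpos hu.1.le hu.2)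
  have hnorm : EqOn (fun y => ‖log y ^ 2 / y‖) (fun y => log y ^ 2 / y) (uIcc u 1) :=
    fun y hy => norm_of_nonneg (div_nonneg (sq_nonneg _) ((lt_min hu.1 one_pos).trans_le hy.1).le)
  rw [norm_of_nonpos (inv_nonpos.2 hneg), integral_congr hnorm, neg_mul,
    inv_one_sub_mul_log_mul_integral_log_sq_div_self hu.1, neg_div, neg_neg]

theorem zeta_three_double_integral :
    riemannZeta 3 =
      ((-3 / 2 : ℝ) * ∫ y in (0:ℝ)..1, ∫ x in (0:ℝ)..1,
          (Real.log y) ^ 2 / ((1 - x * y) * Real.log (x * y)) : ℝ) := by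
  have hswap := integral_mul_integral_swap zero_le_one (f := fun u => ((1 - u) * log u)⁻¹)
    (g := fun y => log y ^ 2 / y) (by fun_prop) (by fun_prop)
    (fun x hx => intervalIntegrable_log_sq_div_self hx.1 one_pos)
    ((intervalIntegrable_log_sq_div_one_sub.div_const 3).1.congr_fun
      (fun u hu => (norm_inv_one_sub_mul_log_mul_integral_norm_log_sq_div_self hu).symm)
      measurableSet_Ioc)
  have hinner : ∫ u in (0:ℝ)..1, ((1 - u) * log u)⁻¹ * ∫ y in u..1, log y ^ 2 / y =
      -(∫ u in (0:ℝ)..1, log u ^ 2 / (1 - u)) / 3 := by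
    rw [← intervalIntegral.integral_neg, ← intervalIntegral.integral_div]
    refine integral_congr_ae (ae_of_all _ fun u hu => ?_)
    exact inv_one_sub_mul_log_mul_integral_log_sq_div_self (by simpa using hu.1)
  simp_rw [integral_log_sq_div_one_sub_mul_mul_log]
  rw [hswap, hinner, integral_log_sq_div_one_sub, ← Nat.cast_ofNat,
    riemannZeta_natCast_eq_ofReal_tsum (by norm_num)]
  push_cast
  ring
end

section
/- For real s > 0, the digamma function satisfies ψ(s) = ∫_0^1 ∫_0^1 ((xy)^{s−1} − y)/((1−xy)·log(xy)) dx dy. -/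
open MeasureTheory Real Set Filter Topology

/-!
Substituting `u = x y` in the inner integral and exchanging the order of integration, the
`y`-integral is elementary and the double integral becomes Gauss's integral
`-∫₀¹ (u^(s-1)/(1-u) + 1/log u) du`. Expanding `u^(s-1)/(1-u)` as a geometric sum of `n` terms plus
a remainder, and using `∫₀¹ (u^p - 1)/log u du = log (p + 1)` (differentiate in `p`), this integral
equals `∑_{k<n} 1/(s+k) - log (s+n) + O(1/(s+n))`. On the other hand `ψ(x + 1) = ψ(x) + 1/x` and
convexity of `log Γ` give `log x - 1/x ≤ ψ(x) ≤ log x`, so `ψ(s) = log (s+n) - ∑_{k<n} 1/(s+k)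
+ O(1/(s+n))`; letting `n → ∞` proves the formula.
-/

lemma one_sub_le_neg_log {t : ℝ} (ht : 0 < t) : 1 - t ≤ -log t := by
  linarith [log_le_sub_one_of_pos ht]

lemma abs_one_sub_rpow_le {t p : ℝ} (ht : t ∈ Ioo (0 : ℝ) 1) (hp : -1 < p) :
    |1 - t ^ p| ≤ (1 + |p|) * (1 + t ^ p) * (1 - t) := by
  obtain ⟨ht0, ht1⟩ := ht
  have htp : 0 < t ^ p := rpow_pos_of_pos ht0 p
  have hp_abs : 0 ≤ |p| := abs_nonneg p
  have h1t : 0 < 1 - t := by linarith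
  rcases le_total p 0 with hp0 | hp0
  · -- `t ^ p - 1 = t ^ p (1 - t ^ (-p))`, and `t ≤ t ^ (-p)` because `0 ≤ -p ≤ 1`
    have hge : 1 ≤ t ^ p := one_le_rpow_of_pos_of_le_one_of_nonpos ht0 ht1.le hp0
    have hle : t ≤ t ^ (-p) := by
      simpa using rpow_le_rpow_of_exponent_ge ht0 ht1.le (show -p ≤ 1 by linarith)
    have hinv : t ^ p * t ^ (-p) = 1 := by rw [← rpow_add ht0]; simp
    rw [abs_of_nonpos (by linarith)]
    nlinarith [mul_le_mul_of_nonneg_left hle htp.le, mul_nonneg hp_abs h1t.le,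
      mul_nonneg (mul_nonneg hp_abs htp.le) h1t.le]
  rcases le_total p 1 with hp1 | hp1
  · have hle : t ≤ t ^ p := by
      simpa using rpow_le_rpow_of_exponent_ge ht0 ht1.le hp1
    rw [abs_of_nonneg (by linarith [rpow_le_one ht0.le ht1.le hp0])]
    nlinarith [mul_nonneg hp_abs h1t.le, mul_nonneg htp.le h1t.le,
      mul_nonneg (mul_nonneg hp_abs htp.le) h1t.le]
  · have hbern : 1 + p * (t - 1) ≤ t ^ p := by
      simpa using one_add_mul_self_le_rpow_one_add (show -1 ≤ t - 1 by linarith) hp1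
    rw [abs_of_nonneg (by linarith [rpow_le_one ht0.le ht1.le hp0]), abs_of_nonneg hp0]
    nlinarith [mul_nonneg htp.le h1t.le, mul_nonneg (mul_nonneg hp0 htp.le) h1t.le]

lemma inv_one_sub_add_inv_log_mem_Icc {t : ℝ} (ht : t ∈ Ioo (0 : ℝ) 1) :
    (1 - t)⁻¹ + (log t)⁻¹ ∈ Icc (0 : ℝ) 1 := by
  obtain ⟨ht0, ht1⟩ := ht
  have hlog : log t < 0 := log_neg ht0 ht1
  have h1t : 0 < 1 - t := by linarith
  have hlower := one_sub_le_neg_log ht0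
  have hupper : t * -log t ≤ 1 - t := by
    have := one_sub_inv_le_log_of_pos ht0
    have : t * (t⁻¹ - 1) = 1 - t := by field_simp
    nlinarith
  constructor
  · have := inv_anti₀ h1t hlower
    rw [inv_neg] at this
    linarith
  · rw [inv_add_inv h1t.ne' hlog.ne, div_le_one_of_neg (mul_neg_of_pos_of_neg h1t hlog)]
    nlinarith

namespace Real

lemma differentiableAt_Gamma_of_pos {x : ℝ} (hx : 0 < x) : DifferentiableAt ℝ Gamma x :=
  differentiableAt_Gamma fun m => ((neg_nonpos.mpr m.cast_nonneg).trans_lt hx).ne'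

lemma logDeriv_Gamma_eq_deriv_log_comp {x : ℝ} (hx : 0 < x) :
    logDeriv Gamma x = deriv (log ∘ Gamma) x :=
  (deriv_log_comp_eq_logDeriv (differentiableAt_Gamma_of_pos hx) (Gamma_pos_of_pos hx).ne').symm

lemma log_Gamma_add_one {x : ℝ} (hx : 0 < x) :
    log (Gamma (x + 1)) = log (Gamma x) + log x := by
  rw [Gamma_add_one hx.ne', log_mul hx.ne' (Gamma_pos_of_pos hx).ne', add_comm]

lemma logDeriv_Gamma_add_one {x : ℝ} (hx : 0 < x) :
    logDeriv Gamma (x + 1) = logDeriv Gamma x + x⁻¹ := by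
  rw [logDeriv_Gamma_eq_deriv_log_comp hx, logDeriv_Gamma_eq_deriv_log_comp (by linarith),
    ← deriv_comp_add_const, ← deriv_log, ← deriv_add (f := log ∘ Gamma)
      ((differentiableAt_Gamma_of_pos hx).log (Gamma_pos_of_pos hx).ne')
      (differentiableAt_log hx.ne')]
  exact EventuallyEq.deriv_eq <| by
    filter_upwards [eventually_gt_nhds hx] with y hy using log_Gamma_add_one hy

lemma logDeriv_Gamma_add_nat {x : ℝ} (hx : 0 < x) (n : ℕ) :
    logDeriv Gamma (x + n) = logDeriv Gamma x + ∑ k ∈ Finset.range n, (x + k)⁻¹ := by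
  induction n with
  | zero => simp
  | succ n ih =>
    rw [Nat.cast_succ, ← add_assoc, logDeriv_Gamma_add_one (by positivity), ih,
      Finset.sum_range_succ, add_assoc]

lemma logDeriv_Gamma_le_log {x : ℝ} (hx : 0 < x) : logDeriv Gamma x ≤ log x := by
  rw [logDeriv_Gamma_eq_deriv_log_comp hx]
  refine (convexOn_log_Gamma.deriv_le_slope hx (by positivity : (0 : ℝ) < x + 1)
    (by linarith) ((differentiableAt_Gamma_of_pos hx).log (Gamma_pos_of_pos hx).ne')).trans_eq ?_
  rw [slope_def_field, add_sub_cancel_left, div_one, Function.comp_apply, Function.comp_apply,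
    log_Gamma_add_one hx, add_sub_cancel_left]

lemma log_le_logDeriv_Gamma_add_inv {x : ℝ} (hx : 0 < x) : log x ≤ logDeriv Gamma x + x⁻¹ := by
  have hx1 : 0 < x + 1 := by positivity
  rw [← logDeriv_Gamma_add_one hx, logDeriv_Gamma_eq_deriv_log_comp hx1]
  refine le_of_eq_of_le ?_ (convexOn_log_Gamma.slope_le_deriv hx hx1 (by linarith)
    ((differentiableAt_Gamma_of_pos hx1).log (Gamma_pos_of_pos hx1).ne'))
  rw [slope_def_field, add_sub_cancel_left, div_one, Function.comp_apply, Function.comp_apply,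
    log_Gamma_add_one hx, add_sub_cancel_left]

end Real

lemma integral_Ioo_rpow {p : ℝ} (hp : -1 < p) : ∫ u in Ioo (0 : ℝ) 1, u ^ p = (p + 1)⁻¹ := by
  rw [← integral_Ioc_eq_integral_Ioo, ← intervalIntegral.integral_of_le zero_le_one,
    integral_rpow (Or.inl hp), one_rpow, zero_rpow (by linarith), sub_zero, one_div]

lemma integrableOn_Ioo_rpow {p : ℝ} (hp : -1 < p) : IntegrableOn (fun u : ℝ => u ^ p) (Ioo 0 1) :=
  (intervalIntegral.integrableOn_Ioo_rpow_iff zero_lt_one).mpr hp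

lemma abs_rpow_sub_one_div_log_le {u p : ℝ} (hu : u ∈ Ioo (0 : ℝ) 1) (hp : -1 < p) :
    |(u ^ p - 1) / log u| ≤ (1 + |p|) * (1 + u ^ p) := by
  have hlog : 0 < -log u := neg_pos.mpr (log_neg hu.1 hu.2)
  rw [abs_div, abs_sub_comm, abs_of_neg (neg_pos.mp hlog), div_le_iff₀ hlog]
  calc |1 - u ^ p| ≤ (1 + |p|) * (1 + u ^ p) * (1 - u) := abs_one_sub_rpow_le hu hp
    _ ≤ (1 + |p|) * (1 + u ^ p) * -log u := by
      gcongr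
      · have := rpow_pos_of_pos hu.1 p
        positivity
      · exact one_sub_le_neg_log hu.1

lemma integrableOn_rpow_sub_one_div_log {p : ℝ} (hp : -1 < p) :
    IntegrableOn (fun u => (u ^ p - 1) / log u) (Ioo 0 1) := by
  refine Integrable.mono'
    (((integrable_const 1).add (integrableOn_Ioo_rpow hp)).const_mul (1 + |p|))
    (Measurable.aestronglyMeasurable (by fun_prop)) ?_
  filter_upwards [ae_restrict_mem measurableSet_Ioo] with u hu
  exact abs_rpow_sub_one_div_log_le hu hp

lemma hasDerivAt_rpow_sub_one_div_log {u : ℝ} (hu0 : 0 < u) (hu1 : u ≠ 1) (p : ℝ) :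
    HasDerivAt (fun p => (u ^ p - 1) / log u) (u ^ p) p := by
  have hlog : log u ≠ 0 := log_ne_zero_of_pos_of_ne_one hu0 hu1
  exact (((hasStrictDerivAt_const_rpow hu0 p).hasDerivAt.sub_const 1).div_const (log u)).congr_deriv
    (by field_simp)

lemma hasDerivAt_integral_rpow_sub_one_div_log {p : ℝ} (hp : -1 < p) :
    HasDerivAt (fun p => ∫ u in Ioo (0 : ℝ) 1, (u ^ p - 1) / log u) (p + 1)⁻¹ p := by
  -- on the ball of radius `(p + 1) / 2` around `p`, `u ^ q` is dominated by `u ^ ((p - 1) / 2)`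
  have hq : -1 < (p - 1) / 2 := by linarith
  have key := hasDerivAt_integral_of_dominated_loc_of_deriv_le
    (F := fun q u => (u ^ q - 1) / log u) (F' := fun q u => u ^ q)
    (bound := fun u => u ^ ((p - 1) / 2))
    (Metric.ball_mem_nhds p (by linarith : 0 < (p + 1) / 2))
    (by filter_upwards with q using Measurable.aestronglyMeasurable (by fun_prop))
    (integrableOn_rpow_sub_one_div_log hp) (by fun_prop) ?_ (integrableOn_Ioo_rpow hq) ?_
  · rw [← integral_Ioo_rpow hp]
    exact key.2
  · filter_upwards [ae_restrict_mem measurableSet_Ioo] with u hu q hq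
    rw [norm_of_nonneg (rpow_nonneg hu.1.le q)]
    rw [Metric.mem_ball, Real.dist_eq, abs_lt] at hq
    exact rpow_le_rpow_of_exponent_ge hu.1 hu.2.le (by linarith)
  · filter_upwards [ae_restrict_mem measurableSet_Ioo] with u hu q _
    exact hasDerivAt_rpow_sub_one_div_log hu.1 hu.2.ne q

lemma integral_rpow_sub_one_div_log {p : ℝ} (hp : -1 < p) :
    ∫ u in Ioo (0 : ℝ) 1, (u ^ p - 1) / log u = log (p + 1) := by
  have hF (q : ℝ) (hq : q ∈ Ioi (-1 : ℝ)) := hasDerivAt_integral_rpow_sub_one_div_log hq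
  have hG (q : ℝ) (hq : q ∈ Ioi (-1 : ℝ)) : HasDerivAt (fun q => log (q + 1)) (q + 1)⁻¹ q := by
    simpa using ((hasDerivAt_id' q).add_const 1).log
      (show 0 < q + 1 by linarith [mem_Ioi.mp hq]).ne'
  refine isOpen_Ioi.eqOn_of_deriv_eq isPreconnected_Ioi
    (fun q hq => (hF q hq).differentiableAt.differentiableWithinAt)
    (fun q hq => (hG q hq).differentiableAt.differentiableWithinAt)
    (fun q hq => (hF q hq).deriv.trans (hG q hq).deriv.symm)
    (show (0 : ℝ) ∈ Ioi (-1) by norm_num) ?_ hp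
  simp

lemma rpow_div_one_sub_add_inv_log_eq {u p : ℝ} (hu0 : 0 < u) (hu1 : u ≠ 1) (n : ℕ) :
    u ^ p / (1 - u) + (log u)⁻¹ =
      ∑ k ∈ Finset.range n, u ^ (p + k) + u ^ (p + n) * ((1 - u)⁻¹ + (log u)⁻¹)
        - (u ^ (p + n) - 1) / log u := by
  have hlog : log u ≠ 0 := log_ne_zero_of_pos_of_ne_one hu0 hu1
  have hgeom : ∑ k ∈ Finset.range n, u ^ (p + k) = u ^ p * ((u ^ n - 1) / (u - 1)) := by
    rw [← geom_sum_eq hu1 n, Finset.mul_sum]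
    simp only [rpow_add hu0, rpow_natCast]
  rw [hgeom, rpow_add hu0, rpow_natCast]
  field_simp
  ring

lemma integrableOn_rpow_mul_inv_one_sub_add_inv_log {p : ℝ} (hp : -1 < p) :
    IntegrableOn (fun u => u ^ p * ((1 - u)⁻¹ + (log u)⁻¹)) (Ioo 0 1) := by
  refine Integrable.mono' (integrableOn_Ioo_rpow hp)
    (Measurable.aestronglyMeasurable (by fun_prop)) ?_
  filter_upwards [ae_restrict_mem measurableSet_Ioo] with u hu
  obtain ⟨h0, h1⟩ := inv_one_sub_add_inv_log_mem_Icc hu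
  rw [norm_mul, norm_of_nonneg (rpow_nonneg hu.1.le p), norm_of_nonneg h0]
  exact mul_le_of_le_one_right (rpow_nonneg hu.1.le p) h1

lemma integral_rpow_mul_inv_one_sub_add_inv_log_mem_Icc {p : ℝ} (hp : -1 < p) :
    ∫ u in Ioo (0 : ℝ) 1, u ^ p * ((1 - u)⁻¹ + (log u)⁻¹) ∈ Icc 0 (p + 1)⁻¹ := by
  constructor
  · exact setIntegral_nonneg measurableSet_Ioo fun u hu =>
      mul_nonneg (rpow_nonneg hu.1.le p) (inv_one_sub_add_inv_log_mem_Icc hu).1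
  · rw [← integral_Ioo_rpow hp]
    exact setIntegral_mono_on (integrableOn_rpow_mul_inv_one_sub_add_inv_log hp)
      (integrableOn_Ioo_rpow hp) measurableSet_Ioo fun u hu =>
        mul_le_of_le_one_right (rpow_nonneg hu.1.le p) (inv_one_sub_add_inv_log_mem_Icc hu).2

lemma integral_rpow_div_one_sub_add_inv_log_eq {p : ℝ} (hp : -1 < p) (n : ℕ) :
    ∫ u in Ioo (0 : ℝ) 1, (u ^ p / (1 - u) + (log u)⁻¹) =
      ∑ k ∈ Finset.range n, (p + k + 1)⁻¹
        + (∫ u in Ioo (0 : ℝ) 1, u ^ (p + n) * ((1 - u)⁻¹ + (log u)⁻¹)) - log (p + n + 1) := by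
  have hpk (k : ℕ) : -1 < p + k := by linarith [k.cast_nonneg (α := ℝ)]
  have hsum : IntegrableOn (fun u : ℝ => ∑ k ∈ Finset.range n, u ^ (p + k)) (Ioo 0 1) :=
    integrable_finsetSum _ fun k _ => integrableOn_Ioo_rpow (hpk k)
  have hrem := integrableOn_rpow_mul_inv_one_sub_add_inv_log (hpk n)
  rw [setIntegral_congr_fun measurableSet_Ioo fun u hu =>
      rpow_div_one_sub_add_inv_log_eq hu.1 hu.2.ne n,
    integral_sub ?_ (integrableOn_rpow_sub_one_div_log (hpk n)), integral_add hsum hrem,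
    integral_finsetSum _ fun k _ => integrableOn_Ioo_rpow (hpk k),
    integral_rpow_sub_one_div_log (hpk n)]
  · simp only [integral_Ioo_rpow (hpk _)]
  · exact hsum.add hrem

theorem integral_rpow_div_one_sub_add_inv_log {s : ℝ} (hs : 0 < s) :
    ∫ u in Ioo (0 : ℝ) 1, (u ^ (s - 1) / (1 - u) + (log u)⁻¹) = -logDeriv Gamma s := by
  generalize hC_def : ∫ u in Ioo (0 : ℝ) 1, (u ^ (s - 1) / (1 - u) + (log u)⁻¹) = C
  -- `C + logDeriv Gamma s` is the difference of two quantities lying in `[0, (s + n)⁻¹]`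
  have hbound (n : ℕ) : |C + logDeriv Gamma s| ≤ (s + n)⁻¹ := by
    have hsn : 0 < s + n := by positivity
    have hC := integral_rpow_div_one_sub_add_inv_log_eq (show -1 < s - 1 by linarith) n
    have hrem := integral_rpow_mul_inv_one_sub_add_inv_log_mem_Icc
      (show -1 < s - 1 + n by linarith)
    have hshift (x : ℝ) : s - 1 + x + 1 = s + x := by ring
    simp only [hshift, hC_def] at hC hrem
    have hψ := logDeriv_Gamma_add_nat hs n
    have hup := logDeriv_Gamma_le_log hsn
    have hlow := log_le_logDeriv_Gamma_add_inv hsn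
    rw [abs_le]
    constructor <;> linarith [hrem.1, hrem.2]
  have hlim : Tendsto (fun n : ℕ => (s + n)⁻¹) atTop (𝓝 0) :=
    tendsto_inv_atTop_zero.comp (tendsto_atTop_add_const_left _ s tendsto_natCast_atTop_atTop)
  linarith [abs_nonpos_iff.mp (ge_of_tendsto' hlim hbound)]

lemma setIntegral_Ioo_ite_lt_left {y : ℝ} (hy : y ≤ 1) (f : ℝ → ℝ) :
    ∫ u in Ioo (0 : ℝ) 1, (if u < y then f u else 0) = ∫ u in Ioo 0 y, f u := by
  have : (fun u => if u < y then f u else 0) = (Iio y).indicator f := by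
    ext u; simp [indicator_apply]
  rw [this, setIntegral_indicator measurableSet_Iio, Ioo_inter_Iio, min_eq_right hy]

lemma setIntegral_Ioo_ite_lt_right {u : ℝ} (hu : 0 ≤ u) (f : ℝ → ℝ) :
    ∫ y in Ioo (0 : ℝ) 1, (if u < y then f y else 0) = ∫ y in Ioo u 1, f y := by
  have : (fun y => if u < y then f y else 0) = (Ioi u).indicator f := by
    ext y; simp [indicator_apply]
  rw [this, setIntegral_indicator measurableSet_Ioi, Ioo_inter_Ioi, max_eq_right hu]

section Kernel

variable {s u y : ℝ}

/-- The integrand in the variables `u = x y` and `y`, including the Jacobian `y⁻¹`. -/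
noncomputable def digammaKernel (s u y : ℝ) : ℝ :=
  if u < y then y⁻¹ * ((u ^ (s - 1) - y) / ((1 - u) * log u)) else 0

noncomputable def digammaKernelBound (s u y : ℝ) : ℝ :=
  if u < y then y⁻¹ * (((1 + |s - 1|) * (1 + u ^ (s - 1)) + 1) / -log u) else 0

lemma intervalIntegral_eq_setIntegral_digammaKernel (hy : y ∈ Ioo (0 : ℝ) 1) :
    ∫ x in (0 : ℝ)..1, ((x * y) ^ (s - 1) - y) / ((1 - x * y) * log (x * y)) =
      ∫ u in Ioo (0 : ℝ) 1, digammaKernel s u y := by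
  rw [intervalIntegral.integral_comp_mul_right (fun u => (u ^ (s - 1) - y) / ((1 - u) * log u))
      hy.1.ne', zero_mul, one_mul, intervalIntegral.integral_of_le hy.1.le,
    integral_Ioc_eq_integral_Ioo, smul_eq_mul, ← integral_const_mul]
  exact (setIntegral_Ioo_ite_lt_left hy.2.le _).symm

lemma setIntegral_digammaKernel_right (hu : u ∈ Ioo (0 : ℝ) 1) :
    ∫ y in Ioo (0 : ℝ) 1, digammaKernel s u y = -(u ^ (s - 1) / (1 - u) + (log u)⁻¹) := by
  obtain ⟨hu0, hu1⟩ := hu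
  have hlog : log u ≠ 0 := (log_neg hu0 hu1).ne
  have hpos : ∀ y ∈ uIcc u 1, 0 < y := fun y hy =>
    hu0.trans_le (uIcc_of_le hu1.le ▸ hy).1
  unfold digammaKernel
  rw [setIntegral_Ioo_ite_lt_right hu0.le, ← integral_Ioc_eq_integral_Ioo,
    ← intervalIntegral.integral_of_le hu1.le,
    intervalIntegral.integral_congr (g := fun y => (u ^ (s - 1) * y⁻¹ - 1) / ((1 - u) * log u))
      fun y hy => by field_simp [(hpos y hy).ne'],
    intervalIntegral.integral_div, intervalIntegral.integral_sub
      ((intervalIntegral.intervalIntegrable_inv (fun y hy => (hpos y hy).ne')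
        continuousOn_id).const_mul _) intervalIntegrable_const,
    intervalIntegral.integral_const_mul, integral_inv_of_pos hu0 one_pos,
    intervalIntegral.integral_const, one_div, log_inv]
  field_simp
  ring

lemma measurable_digammaKernel (s : ℝ) : Measurable (Function.uncurry (digammaKernel s)) :=
  Measurable.ite (measurableSet_lt measurable_fst measurable_snd) (by fun_prop) measurable_const

lemma measurable_digammaKernelBound (s : ℝ) :
    Measurable (Function.uncurry (digammaKernelBound s)) :=
  Measurable.ite (measurableSet_lt measurable_fst measurable_snd) (by fun_prop) measurable_const

lemma digammaKernelBound_nonneg (hu : u ∈ Ioo (0 : ℝ) 1) : 0 ≤ digammaKernelBound s u y := by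
  have hlog : 0 < -log u := neg_pos.mpr (log_neg hu.1 hu.2)
  have := rpow_pos_of_pos hu.1 (s - 1)
  unfold digammaKernelBound
  split_ifs with huy
  · have := hu.1.trans huy
    positivity
  · exact le_rfl

lemma abs_digammaKernel_le (hs : 0 < s) (hu : u ∈ Ioo (0 : ℝ) 1) (hy : y ≤ 1) :
    |digammaKernel s u y| ≤ digammaKernelBound s u y := by
  obtain ⟨hu0, hu1⟩ := hu
  have hlog : 0 < -log u := neg_pos.mpr (log_neg hu0 hu1)
  have h1u : 0 < 1 - u := by linarith
  unfold digammaKernel digammaKernelBound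
  split_ifs with huy
  · have hy0 : 0 < y := hu0.trans huy
    have hnum : |u ^ (s - 1) - y| ≤ ((1 + |s - 1|) * (1 + u ^ (s - 1)) + 1) * (1 - u) := by
      calc |u ^ (s - 1) - y| ≤ |1 - u ^ (s - 1)| + (1 - y) := by
            rw [abs_sub_comm 1, ← abs_of_nonneg (by linarith : 0 ≤ 1 - y)]
            exact abs_sub_le _ _ _
        _ ≤ (1 + |s - 1|) * (1 + u ^ (s - 1)) * (1 - u) + (1 - u) := by
            gcongr
            exact abs_one_sub_rpow_le ⟨hu0, hu1⟩ (by linarith)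
        _ = ((1 + |s - 1|) * (1 + u ^ (s - 1)) + 1) * (1 - u) := by ring
    rw [abs_mul, abs_of_pos (inv_pos.mpr hy0), abs_div, abs_mul, abs_of_pos h1u,
      abs_of_neg (neg_pos.mp hlog)]
    gcongr y⁻¹ * ?_
    calc |u ^ (s - 1) - y| / ((1 - u) * -log u)
        ≤ ((1 + |s - 1|) * (1 + u ^ (s - 1)) + 1) * (1 - u) / ((1 - u) * -log u) := by gcongr
      _ = ((1 + |s - 1|) * (1 + u ^ (s - 1)) + 1) / -log u := by field_simp
  · simp

lemma integrable_digammaKernelBound_right (hu : u ∈ Ioo (0 : ℝ) 1) :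
    Integrable (digammaKernelBound s u) (volume.restrict (Ioo 0 1)) := by
  have hlog : 0 < -log u := neg_pos.mpr (log_neg hu.1 hu.2)
  have := rpow_pos_of_pos hu.1 (s - 1)
  refine Integrable.mono'
    (integrable_const (u⁻¹ * (((1 + |s - 1|) * (1 + u ^ (s - 1)) + 1) / -log u)))
    ((measurable_digammaKernelBound s).comp measurable_prodMk_left).aestronglyMeasurable
    (ae_of_all _ fun y => ?_)
  rw [norm_of_nonneg (digammaKernelBound_nonneg hu)]
  unfold digammaKernelBound
  split_ifs with huy
  · gcongr
    exact hu.1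
  · exact mul_nonneg (inv_nonneg.mpr hu.1.le) (div_nonneg (by positivity) hlog.le)

lemma integral_digammaKernelBound_right (hu : u ∈ Ioo (0 : ℝ) 1) :
    ∫ y in Ioo (0 : ℝ) 1, digammaKernelBound s u y = (1 + |s - 1|) * (1 + u ^ (s - 1)) + 1 := by
  have hlog : log u ≠ 0 := (log_neg hu.1 hu.2).ne
  unfold digammaKernelBound
  rw [setIntegral_Ioo_ite_lt_right hu.1.le, ← integral_Ioc_eq_integral_Ioo,
    ← intervalIntegral.integral_of_le hu.2.le, intervalIntegral.integral_mul_const,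
    integral_inv_of_pos hu.1 one_pos, one_div, log_inv]
  field_simp

lemma integrable_digammaKernelBound (hs : 0 < s) :
    Integrable (Function.uncurry (digammaKernelBound s))
      ((volume.restrict (Ioo (0 : ℝ) 1)).prod (volume.restrict (Ioo (0 : ℝ) 1))) := by
  rw [integrable_prod_iff (measurable_digammaKernelBound s).aestronglyMeasurable]
  refine ⟨?_, ?_⟩
  · filter_upwards [ae_restrict_mem measurableSet_Ioo] with u hu
      using integrable_digammaKernelBound_right hu
  · refine Integrable.congr ((((integrable_const 1).add
      (integrableOn_Ioo_rpow (show -1 < s - 1 by linarith))).const_mul (1 + |s - 1|)).add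
        (integrable_const 1)) ?_
    filter_upwards [ae_restrict_mem measurableSet_Ioo] with u hu
    simp only [Function.uncurry_apply_pair, norm_of_nonneg (digammaKernelBound_nonneg hu),
      integral_digammaKernelBound_right hu, Pi.add_apply]

lemma integrable_digammaKernel (hs : 0 < s) :
    Integrable (Function.uncurry (digammaKernel s))
      ((volume.restrict (Ioo (0 : ℝ) 1)).prod (volume.restrict (Ioo (0 : ℝ) 1))) := by
  refine (integrable_digammaKernelBound hs).mono'
    (measurable_digammaKernel s).aestronglyMeasurable ?_
  rw [Measure.prod_restrict]
  filter_upwards [ae_restrict_mem (measurableSet_Ioo.prod measurableSet_Ioo)]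
    with ⟨u, y⟩ ⟨hu, hy⟩
  exact abs_digammaKernel_le hs hu hy.2.le

end Kernel

theorem digamma_double_integral (s : ℝ) (hs : 0 < s) :
    deriv Real.Gamma s / Real.Gamma s =
      ∫ y in (0:ℝ)..1, ∫ x in (0:ℝ)..1,
        ((x * y) ^ (s - 1) - y) / ((1 - x * y) * Real.log (x * y)) := by
  rw [← logDeriv_apply, intervalIntegral.integral_of_le zero_le_one,
    integral_Ioc_eq_integral_Ioo,
    setIntegral_congr_fun measurableSet_Ioo fun y hy =>
      intervalIntegral_eq_setIntegral_digammaKernel hy,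
    ← integral_integral_swap (integrable_digammaKernel hs),
    setIntegral_congr_fun measurableSet_Ioo fun u hu => setIntegral_digammaKernel_right hu,
    integral_neg, integral_rpow_div_one_sub_add_inv_log hs, neg_neg]
end
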